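/- arXiv:math/9707220 — 10 statements merged into one kernel-verified Lean document; each statement's English description precedes it below -/
import Mathlib

section
/- A lattice is distributive if and only if it contains neither M3 nor N5 as a sublattice. -/
set_option linter.unusedSectionVars false
set_option linter.unreachableTactic false
set_option linter.unusedTactic false

/-- `L` contains a sublattice isomorphic to `M₃`: five distinct elements
`o, a, b, c, i` where the three middle elements pairwise meet to `o` and
pairwise join to `i`. -/
def HasM3Sublattice (L : Type*) [Lattice L] : Prop :=
  ∃ o a b c i : L,
    o ≠ a ∧ o ≠ b ∧ o ≠ c ∧ o ≠ i ∧ a ≠ b ∧ a ≠ c ∧ a ≠ i ∧ b ≠ c ∧ b ≠ i ∧ c ≠ i ∧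
    a ⊓ b = o ∧ a ⊓ c = o ∧ b ⊓ c = o ∧ a ⊔ b = i ∧ a ⊔ c = i ∧ b ⊔ c = i

/-- `L` contains a sublattice isomorphic to `N₅`: five distinct elements
`o, a, b, c, i` with `a < b`, where `c` meets each of `a, b` to `o` and
joins each of `a, b` to `i`. -/
def HasN5Sublattice (L : Type*) [Lattice L] : Prop :=
  ∃ o a b c i : L,
    o ≠ a ∧ o ≠ b ∧ o ≠ c ∧ o ≠ i ∧ a ≠ b ∧ a ≠ c ∧ a ≠ i ∧ b ≠ c ∧ b ≠ i ∧ c ≠ i ∧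
    a < b ∧ a ⊓ c = o ∧ b ⊓ c = o ∧ a ⊔ c = i ∧ b ⊔ c = i

section Aux

variable {L : Type*} [Lattice L]

lemma BD.inf_sh (p q r : L) : p ⊓ r ⊓ (q ⊓ r) = q ⊓ p ⊓ r := by
  simp [inf_assoc, inf_comm, inf_left_comm]

lemma BD.sup_sh (p q r : L) : r ⊔ p ⊔ (r ⊔ q) = q ⊔ p ⊔ r := by
  simp [sup_assoc, sup_comm, sup_left_comm]

/-- If a lattice has no `N₅` sublattice then it is modular. -/
lemma BD.modular_of_no_N5 (h : ¬ HasN5Sublattice L) : IsModularLattice L := by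
  constructor
  intro x y z hxz
  by_contra hc
  have hAB : x ⊔ y ⊓ z ≤ (x ⊔ y) ⊓ z :=
    sup_le (le_inf le_sup_left hxz) (le_inf (inf_le_left.trans le_sup_right) inf_le_right)
  have hlt : x ⊔ y ⊓ z < (x ⊔ y) ⊓ z := lt_iff_le_not_ge.2 ⟨hAB, hc⟩
  have hmA : (x ⊔ y ⊓ z) ⊓ y = y ⊓ z :=
    le_antisymm (le_inf inf_le_right ((inf_le_left.trans hAB).trans inf_le_right))
      (le_inf le_sup_right inf_le_left)
  have hmB : ((x ⊔ y) ⊓ z) ⊓ y = y ⊓ z :=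
    le_antisymm (le_inf inf_le_right (inf_le_left.trans inf_le_right))
      (le_inf (le_sup_right.trans hAB) inf_le_left)
  have hjA : (x ⊔ y ⊓ z) ⊔ y = x ⊔ y :=
    le_antisymm (sup_le (sup_le le_sup_left (inf_le_left.trans le_sup_right)) le_sup_right)
      (sup_le (le_sup_left.trans le_sup_left) le_sup_right)
  have hjB : ((x ⊔ y) ⊓ z) ⊔ y = x ⊔ y :=
    le_antisymm (sup_le inf_le_left le_sup_right)
      (sup_le ((le_sup_left.trans hAB).trans le_sup_left) le_sup_right)
  have n1 : y ⊓ z ≠ x ⊔ y ⊓ z := by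
    intro e
    have hx : x ≤ y ⊓ z := le_sup_left.trans e.ge
    have hxy : x ⊔ y = y := sup_eq_right.2 (hx.trans inf_le_left)
    exact hlt.ne (le_antisymm hAB (by rw [hxy]; exact le_sup_right))
  have n2 : y ⊓ z ≠ (x ⊔ y) ⊓ z := (lt_of_le_of_lt le_sup_right hlt).ne
  have n3 : y ⊓ z ≠ y := by
    intro e
    have hA' : x ⊔ y ⊓ z = x ⊔ y := by rw [e]
    exact hlt.not_ge (by rw [hA']; exact inf_le_left)
  have n4 : y ⊓ z ≠ x ⊔ y :=
    (((lt_of_le_of_lt le_sup_right hlt)).trans_le inf_le_left).ne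
  have n6 : x ⊔ y ⊓ z ≠ y := by
    intro e
    exact n3 (by rw [← hmA, e, inf_idem])
  have n7 : x ⊔ y ⊓ z ≠ x ⊔ y := (hlt.trans_le inf_le_left).ne
  have n8 : (x ⊔ y) ⊓ z ≠ y := by
    intro e
    exact n3 (by rw [← hmB, e, inf_idem])
  have n9 : (x ⊔ y) ⊓ z ≠ x ⊔ y := by
    intro e
    have h1 : x ⊔ y ≤ z := by rw [← e]; exact inf_le_right
    apply hlt.ne
    rw [inf_eq_left.2 (le_sup_right.trans h1 : y ≤ z), e]
  have n10 : y ≠ x ⊔ y := by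
    intro e
    have hxy : x ≤ y := le_sup_left.trans e.ge
    apply hlt.ne
    rw [sup_eq_right.2 (le_inf hxy hxz), ← e]
  exact h ⟨y ⊓ z, x ⊔ y ⊓ z, (x ⊔ y) ⊓ z, y, x ⊔ y, n1, n2, n3, n4, hlt.ne, n6, n7, n8, n9,
    n10, hlt, hmA, hmB, hjA, hjB⟩

/-- the bottom of the median construction -/
def BD.O (x y z : L) : L := x ⊓ y ⊔ y ⊓ z ⊔ z ⊓ x

/-- the top of the median construction -/
def BD.I (x y z : L) : L := (x ⊔ y) ⊓ (y ⊔ z) ⊓ (z ⊔ x)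

/-- the middle elements of the median construction -/
def BD.E (x y z : L) : L := x ⊓ BD.I x y z ⊔ BD.O x y z

namespace BD

lemma O_comm (x y z : L) : O x y z = O y x z := by
  rw [O, O, inf_comm x y, inf_comm y z, inf_comm z x]; ac_rfl
lemma O_rot (x y z : L) : O x y z = O y z x := by
  rw [O, O]; ac_rfl
lemma O_swap23 (x y z : L) : O x y z = O x z y := by
  rw [O_comm, O_rot]
lemma I_comm (x y z : L) : I x y z = I y x z := by
  rw [I, I, sup_comm x y, sup_comm y z, sup_comm z x]; ac_rfl
lemma I_rot (x y z : L) : I x y z = I y z x := by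
  rw [I, I]; ac_rfl
lemma I_swap23 (x y z : L) : I x y z = I x z y := by
  rw [I_comm, I_rot]

lemma O_le_I (x y z : L) : O x y z ≤ I x y z := by
  show x ⊓ y ⊔ y ⊓ z ⊔ z ⊓ x ≤ (x ⊔ y) ⊓ (y ⊔ z) ⊓ (z ⊔ x)
  refine sup_le (sup_le (le_inf (le_inf ?_ ?_) ?_) (le_inf (le_inf ?_ ?_) ?_))
    (le_inf (le_inf ?_ ?_) ?_) <;>
  first
    | exact inf_le_left.trans le_sup_left
    | exact inf_le_left.trans le_sup_right
    | exact inf_le_right.trans le_sup_left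
    | exact inf_le_right.trans le_sup_right

lemma inf_I (x y z : L) : x ⊓ I x y z = x ⊓ (y ⊔ z) := by
  refine le_antisymm (le_inf inf_le_left ((inf_le_right.trans inf_le_left).trans inf_le_right)) ?_
  exact le_inf inf_le_left (le_inf (le_inf (inf_le_left.trans le_sup_left) inf_le_right)
    (inf_le_left.trans le_sup_right))

lemma sup_O (x y z : L) : x ⊔ O x y z = x ⊔ y ⊓ z := by
  refine le_antisymm (sup_le le_sup_left (sup_le (sup_le (inf_le_left.trans le_sup_left)
    le_sup_right) (inf_le_right.trans le_sup_left))) ?_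
  exact sup_le le_sup_left (le_sup_of_le_right (le_sup_of_le_left le_sup_right))

lemma E_swap23 (x y z : L) : E x y z = E x z y := by
  rw [E, E, I_swap23, O_swap23]

variable [IsModularLattice L]

lemma E_eq (x y z : L) : E x y z = (x ⊔ y ⊓ z) ⊓ I x y z := by
  rw [E, sup_comm (x ⊓ I x y z) (O x y z), ← sup_inf_assoc_of_le x (O_le_I x y z),
    sup_comm (O x y z) x, sup_O]

lemma E_eq' (x y z : L) : E x y z = O x y z ⊔ x ⊓ (y ⊔ z) := by
  rw [E, inf_I, sup_comm (x ⊓ (y ⊔ z)) (O x y z)]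

lemma keyMeet (x y z : L) : E x y z ⊓ E y x z = O x y z := by
  rw [E_eq, E_eq, I_comm y x z, inf_sh (x ⊔ y ⊓ z) (y ⊔ x ⊓ z) (I x y z)]
  have h2 : (y ⊔ x ⊓ z) ⊓ (x ⊔ y ⊓ z) = x ⊓ z ⊔ y ⊓ (x ⊔ y ⊓ z) := by
    rw [sup_comm y (x ⊓ z),
      sup_inf_assoc_of_le y (inf_le_left.trans le_sup_left : x ⊓ z ≤ x ⊔ y ⊓ z)]
  have h3 : y ⊓ (x ⊔ y ⊓ z) = y ⊓ z ⊔ y ⊓ x := by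
    rw [inf_comm y (x ⊔ y ⊓ z), sup_comm x (y ⊓ z),
      sup_inf_assoc_of_le x (inf_le_left : y ⊓ z ≤ y), inf_comm x y]
  have h4 : x ⊓ z ⊔ (y ⊓ z ⊔ y ⊓ x) = O x y z := by
    rw [O, inf_comm y x, inf_comm z x]; ac_rfl
  rw [h2, h3, h4, inf_eq_left.2 (O_le_I x y z)]

lemma keyJoin (x y z : L) : E x y z ⊔ E y x z = I x y z := by
  rw [E_eq', E_eq', O_comm y x z, sup_sh (x ⊓ (y ⊔ z)) (y ⊓ (x ⊔ z)) (O x y z)]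
  have h2 : y ⊓ (x ⊔ z) ⊔ x ⊓ (y ⊔ z) = (x ⊔ z) ⊓ (y ⊔ x ⊓ (y ⊔ z)) := by
    rw [inf_comm y (x ⊔ z),
      inf_sup_assoc_of_le y (inf_le_left.trans le_sup_left : x ⊓ (y ⊔ z) ≤ x ⊔ z)]
  have h3 : y ⊔ x ⊓ (y ⊔ z) = (y ⊔ z) ⊓ (y ⊔ x) := by
    rw [inf_comm x (y ⊔ z), sup_comm y ((y ⊔ z) ⊓ x),
      inf_sup_assoc_of_le x (le_sup_left : y ≤ y ⊔ z), sup_comm x y]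
  have h4 : (x ⊔ z) ⊓ ((y ⊔ z) ⊓ (y ⊔ x)) = I x y z := by
    rw [I, sup_comm y x, sup_comm z x]; ac_rfl
  rw [h2, h3, h4, sup_eq_left.2 (O_le_I x y z)]

lemma inf_O (x y z : L) : x ⊓ O x y z = x ⊓ y ⊔ x ⊓ z := by
  have hrw : O x y z = x ⊓ y ⊔ x ⊓ z ⊔ y ⊓ z := by
    rw [O, inf_comm z x]; ac_rfl
  rw [hrw, inf_comm x (x ⊓ y ⊔ x ⊓ z ⊔ y ⊓ z),
    sup_inf_assoc_of_le (y ⊓ z) (sup_le inf_le_left inf_le_left : x ⊓ y ⊔ x ⊓ z ≤ x)]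
  exact sup_eq_left.2 (le_sup_of_le_left (le_inf inf_le_right (inf_le_left.trans inf_le_left)))

end BD

/-- generic distinctness of the five M₃ elements -/
lemma BD.distinct {o a b c i : L} (hab : a ⊓ b = o) (hac : a ⊓ c = o) (hbc : b ⊓ c = o)
    (jab : a ⊔ b = i) (jac : a ⊔ c = i) (jbc : b ⊔ c = i) (hoi : o ≠ i) :
    o ≠ a ∧ o ≠ b ∧ o ≠ c ∧ o ≠ i ∧ a ≠ b ∧ a ≠ c ∧ a ≠ i ∧ b ≠ c ∧ b ≠ i ∧ c ≠ i := by
  have hoa : o ≤ a := hab ▸ inf_le_left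
  have hob : o ≤ b := hab ▸ inf_le_right
  have hoc : o ≤ c := hac ▸ inf_le_right
  have hai : a ≤ i := jab ▸ le_sup_left
  have hbi : b ≤ i := jab ▸ le_sup_right
  have hci : c ≤ i := jac ▸ le_sup_right
  have habne : a ≠ b := by
    intro e
    have h1 : o = b := by rw [← hab, e, inf_idem]
    have h2 : i = b := by rw [← jab, e, sup_idem]
    exact hoi (h1.trans h2.symm)
  have hacne : a ≠ c := by
    intro e
    have h1 : o = c := by rw [← hac, e, inf_idem]
    have h2 : i = c := by rw [← jac, e, sup_idem]
    exact hoi (h1.trans h2.symm)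
  have hbcne : b ≠ c := by
    intro e
    have h1 : o = c := by rw [← hbc, e, inf_idem]
    have h2 : i = c := by rw [← jbc, e, sup_idem]
    exact hoi (h1.trans h2.symm)
  have hoane : o ≠ a := by
    intro e
    have hib : i = b := by rw [← jab, ← e, sup_eq_right.2 hob]
    have hco : c = o :=
      calc c = i ⊓ c := (inf_eq_right.2 hci).symm
        _ = b ⊓ c := by rw [hib]
        _ = o := hbc
    exact hoi (show i = o by rw [← jac, ← e, hco, sup_idem]).symm
  have hobne : o ≠ b := by
    intro e
    have hia : i = a := by rw [← jab, ← e, sup_eq_left.2 hoa]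
    have hco : c = o :=
      calc c = i ⊓ c := (inf_eq_right.2 hci).symm
        _ = a ⊓ c := by rw [hia]
        _ = o := hac
    exact hoi (show i = o by rw [← jbc, ← e, hco, sup_idem]).symm
  have hocne : o ≠ c := by
    intro e
    have hia : i = a := by rw [← jac, ← e, sup_eq_left.2 hoa]
    have hbo : b = o :=
      calc b = i ⊓ b := (inf_eq_right.2 hbi).symm
        _ = a ⊓ b := by rw [hia]
        _ = o := hab
    exact hoi (show i = o by rw [← jbc, hbo, ← e, sup_idem]).symm
  have haine : a ≠ i := by
    intro e
    exact hobne
      (calc o = a ⊓ b := hab.symm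
        _ = i ⊓ b := by rw [e]
        _ = b := inf_eq_right.2 hbi)
  have hbine : b ≠ i := by
    intro e
    exact hoane
      (calc o = a ⊓ b := hab.symm
        _ = a ⊓ i := by rw [e]
        _ = a := inf_eq_left.2 hai)
  have hcine : c ≠ i := by
    intro e
    exact hoane
      (calc o = a ⊓ c := hac.symm
        _ = a ⊓ i := by rw [e]
        _ = a := inf_eq_left.2 hai)
  exact ⟨hoane, hobne, hocne, hoi, habne, hacne, haine, hbcne, hbine, hcine⟩

end Aux

/-- Birkhoff–Dedekind: a lattice is distributive if and only if it contains
neither `M₃` nor `N₅` as a sublattice. -/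
theorem distributive_iff_no_M3_no_N5 (L : Type*) [Lattice L] :
    (∀ a b c : L, a ⊓ (b ⊔ c) = (a ⊓ b) ⊔ (a ⊓ c)) ↔
      ¬ HasM3Sublattice L ∧ ¬ HasN5Sublattice L := by
  constructor
  · intro hd
    constructor
    · rintro ⟨o, a, b, c, i, hoa, _, _, _, _, _, _, _, _, _, mab, mac, mbc, jab, jac, jbc⟩
      have hai : a ≤ i := jab ▸ le_sup_left
      have : a = o := by
        have h := hd a b c
        rw [mab, mac, sup_idem, jbc, inf_eq_left.2 hai] at h
        exact h
      exact hoa this.symm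
    · rintro ⟨o, a, b, c, i, _, _, _, _, habne, _, _, _, _, _, hlt, mac, mbc, jac, jbc⟩
      have hb : b ≤ i := jbc ▸ le_sup_left
      have h := hd b a c
      rw [mbc, inf_eq_right.2 hlt.le, jac, inf_eq_left.2 hb,
        sup_eq_left.2 (mac ▸ inf_le_left : o ≤ a)] at h
      exact habne h.symm
  · rintro ⟨hM3, hN5⟩
    haveI := BD.modular_of_no_N5 hN5
    intro x y z
    by_contra hne
    apply hM3
    have mab : BD.E x y z ⊓ BD.E y x z = BD.O x y z := BD.keyMeet x y z
    have mac : BD.E x y z ⊓ BD.E z x y = BD.O x y z := by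
      rw [BD.E_swap23 x y z, BD.keyMeet x z y]
      exact (BD.O_swap23 x y z).symm
    have mbc : BD.E y x z ⊓ BD.E z x y = BD.O x y z := by
      rw [BD.E_swap23 y x z, BD.E_swap23 z x y, BD.keyMeet y z x]
      exact (BD.O_rot x y z).symm
    have jab : BD.E x y z ⊔ BD.E y x z = BD.I x y z := BD.keyJoin x y z
    have jac : BD.E x y z ⊔ BD.E z x y = BD.I x y z := by
      rw [BD.E_swap23 x y z, BD.keyJoin x z y]
      exact (BD.I_swap23 x y z).symm
    have jbc : BD.E y x z ⊔ BD.E z x y = BD.I x y z := by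
      rw [BD.E_swap23 y x z, BD.E_swap23 z x y, BD.keyJoin y z x]
      exact (BD.I_rot x y z).symm
    have hoi : BD.O x y z ≠ BD.I x y z := by
      intro e
      apply hne
      calc x ⊓ (y ⊔ z) = x ⊓ BD.I x y z := (BD.inf_I x y z).symm
        _ = x ⊓ BD.O x y z := by rw [e]
        _ = x ⊓ y ⊔ x ⊓ z := BD.inf_O x y z
    obtain ⟨d1, d2, d3, d4, d5, d6, d7, d8, d9, d10⟩ :=
      BD.distinct mab mac mbc jab jac jbc hoi
    exact ⟨BD.O x y z, BD.E x y z, BD.E y x z, BD.E z x y, BD.I x y z,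
      d1, d2, d3, d4, d5, d6, d7, d8, d9, d10, mab, mac, mbc, jab, jac, jbc⟩
end

section
/- Every finite distributive lattice with an even number of elements can be partitioned into two-element chains. -/
/-!
Induct over finite sublattices `s` on a stronger claim: `s` splits into two-element chains when
`#s` is even, and so does `s` minus any one of its points when `#s` is odd. Let `b` be the least
element of `s` and `a` an atom of `s`, i.e. minimal above `b`. By distributivity `a` is join-prime
in `s`, so `s` is the disjoint union of the sublattices `F = {x ∈ s | a ≤ x}` and
`I = {x ∈ s | ¬ a ≤ x}`; every `x ∈ I` lies below `x ⊔ a ∈ F`, and every element of `F` lies above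
`b ∈ I`. Partitions of `I` and `F` are glued together; when parity leaves a point of one part
over, it is paired with a comparable point of the other part, whose removal the odd case there
allows.
-/

open Finset Relation

section Preorder

variable {α : Type*} [Preorder α] [DecidableEq α]

inductive ChainPartitionable : Finset α → Prop
  | empty : ChainPartitionable ∅
  | insert_insert {s : Finset α} {x y : α} : ChainPartitionable s → x < y → x ∉ s → y ∉ s →
      ChainPartitionable (insert x (insert y s))

namespace ChainPartitionable

variable {s t : Finset α} {x y m : α}

theorem union (hs : ChainPartitionable s) (ht : ChainPartitionable t) (hst : Disjoint s t) :
    ChainPartitionable (s ∪ t) := by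
  induction hs with
  | empty => simpa
  | @insert_insert s x y _ hxy hx hy ih =>
    simp only [disjoint_insert_left] at hst
    rw [insert_union, insert_union]
    exact (ih hst.2.2).insert_insert hxy (by simp [hx, hst.1]) (by simp [hy, hst.2.1])

theorem of_erase_erase (h : ChainPartitionable ((s.erase x).erase y)) (hxy : x < y)
    (hx : x ∈ s) (hy : y ∈ s) : ChainPartitionable s := by
  have := h.insert_insert hxy (by simp [hxy.ne]) (by simp)
  rwa [insert_erase (mem_erase.2 ⟨hxy.ne', hy⟩), insert_erase hx] at this

theorem union_of_erase (hst : Disjoint s t) (hx : x ∈ s) (hy : y ∈ t) (hxy : SymmGen (· < ·) x y)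
    (hs : ChainPartitionable (s.erase x)) (ht : ChainPartitionable (t.erase y)) :
    ChainPartitionable (s ∪ t) := by
  have herase : ((s ∪ t).erase x).erase y = s.erase x ∪ t.erase y := by
    rw [erase_union_distrib, erase_eq_of_notMem (disjoint_left.1 hst hx), erase_union_distrib,
      erase_eq_of_notMem fun hy' => disjoint_right.1 hst hy (mem_of_mem_erase hy')]
  have h := hs.union ht (disjoint_of_subset_left (erase_subset _ _)
    (disjoint_of_subset_right (erase_subset _ _) hst))
  rw [← herase] at h
  rcases hxy with hxy | hyx
  · exact h.of_erase_erase hxy (mem_union_left _ hx) (mem_union_right _ hy)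
  · rw [erase_right_comm] at h
    exact h.of_erase_erase hyx (mem_union_right _ hy) (mem_union_left _ hx)

theorem exists_erase_erase (h : ChainPartitionable s) (hm : m ∈ s) :
    ∃ u ∈ s, u ≠ m ∧ ChainPartitionable ((s.erase m).erase u) := by
  induction h with
  | empty => simp at hm
  | @insert_insert s x y _ hxy hx hy ih =>
    have hxys : x ∉ insert y s := by simp [hx, hxy.ne]
    rcases mem_insert.1 hm with rfl | hm
    · refine ⟨y, by simp, hxy.ne', ?_⟩
      rwa [erase_insert hxys, erase_insert hy]
    rcases mem_insert.1 hm with rfl | hm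
    · refine ⟨x, by simp, hxy.ne, ?_⟩
      rwa [erase_right_comm, erase_insert hxys, erase_insert hy]
    obtain ⟨u, hu, hum, h⟩ := ih hm
    refine ⟨u, by simp [hu], hum, ?_⟩
    have hxm : x ≠ m := fun h => hx (h ▸ hm)
    have hym : y ≠ m := fun h => hy (h ▸ hm)
    rw [erase_insert_of_ne hxm, erase_insert_of_ne hym,
      erase_insert_of_ne (ne_of_mem_of_not_mem hu hx).symm,
      erase_insert_of_ne (ne_of_mem_of_not_mem hu hy).symm]
    exact h.insert_insert hxy (fun h => hx (mem_of_mem_erase (mem_of_mem_erase h)))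
      (fun h => hy (mem_of_mem_erase (mem_of_mem_erase h)))

theorem exists_finset (h : ChainPartitionable s) :
    ∃ C : Finset (α × α), (∀ p ∈ C, p.1 < p.2) ∧ (∀ p ∈ C, p.1 ∈ s ∧ p.2 ∈ s) ∧
      ∀ x ∈ s, ∃! p : α × α, p ∈ C ∧ (x = p.1 ∨ x = p.2) := by
  induction h with
  | empty => exact ⟨∅, by simp, by simp, by simp⟩
  | @insert_insert s x y _ hxy hx hy ih =>
    obtain ⟨C, hlt, hmem, hcov⟩ := ih
    refine ⟨insert (x, y) C, ?_, ?_, ?_⟩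
    · simpa [hxy] using hlt
    · rintro p hp
      rcases mem_insert.1 hp with rfl | hp
      · simp
      · simp [hmem p hp]
    have hout : ∀ z ∉ s, ∀ q ∈ C, ¬(z = q.1 ∨ z = q.2) := by
      rintro z hz q hq (rfl | rfl)
      exacts [hz (hmem q hq).1, hz (hmem q hq).2]
    intro z hz
    by_cases hzs : z ∈ s
    · obtain ⟨p, ⟨hpC, hzp⟩, hp_unique⟩ := hcov z hzs
      refine ⟨p, ⟨mem_insert_of_mem hpC, hzp⟩, fun q ⟨hq, hzq⟩ => ?_⟩
      rcases mem_insert.1 hq with rfl | hq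
      · rcases hzq with rfl | rfl <;> contradiction
      · exact hp_unique q ⟨hq, hzq⟩
    · have hzxy : z = x ∨ z = y := by simpa [hzs] using hz
      refine ⟨(x, y), ⟨mem_insert_self _ _, hzxy⟩, fun q ⟨hq, hzq⟩ => ?_⟩
      exact (mem_insert.1 hq).resolve_right fun hq => hout z hzs q hq hzq

end ChainPartitionable

def NearlyChainPartitionable (s : Finset α) : Prop :=
  (Even #s → ChainPartitionable s) ∧ (Odd #s → ∀ m ∈ s, ChainPartitionable (s.erase m))

namespace NearlyChainPartitionable

variable {s I F : Finset α}

theorem of_card_le_one (hs : #s ≤ 1) : NearlyChainPartitionable s := by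
  rcases Nat.le_one_iff_eq_zero_or_eq_one.1 hs with hs | hs
  · refine ⟨fun _ => ?_, fun h => absurd h (by simp [hs])⟩
    rw [card_eq_zero.1 hs]
    exact .empty
  · refine ⟨fun h => absurd h (by simp [hs]), fun _ m hm => ?_⟩
    obtain ⟨z, rfl⟩ := card_eq_one.1 hs
    rw [mem_singleton.1 hm, erase_singleton]
    exact .empty

theorem chainPartitionable_union (hIF : Disjoint I F) (hI_F : ∀ x ∈ I, ∃ y ∈ F, SymmGen (· < ·) x y)
    (hI : NearlyChainPartitionable I) (hF : NearlyChainPartitionable F) (h : Even #(I ∪ F)) :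
    ChainPartitionable (I ∪ F) := by
  rw [card_union_of_disjoint hIF, Nat.even_add] at h
  rcases Nat.even_or_odd #I with hIe | hIo
  · exact (hI.1 hIe).union (hF.1 (h.1 hIe)) hIF
  · have hFo : Odd #F := by rwa [← Nat.not_even_iff_odd, ← h, Nat.not_even_iff_odd]
    obtain ⟨x, hx⟩ := card_pos.1 hIo.pos
    obtain ⟨y, hy, hxy⟩ := hI_F x hx
    exact .union_of_erase hIF hx hy hxy (hI.2 hIo x hx) (hF.2 hFo y hy)

theorem chainPartitionable_union_erase (hIF : Disjoint I F)
    (hI_F : ∀ x ∈ I, ∃ y ∈ F, SymmGen (· < ·) x y) (hI : NearlyChainPartitionable I)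
    (hF : NearlyChainPartitionable F) (h : Odd #(I ∪ F)) {m : α} (hm : m ∈ I) :
    ChainPartitionable ((I ∪ F).erase m) := by
  rw [erase_union_distrib, erase_eq_of_notMem (disjoint_left.1 hIF hm)]
  have hImF : Disjoint (I.erase m) F := disjoint_of_subset_left (erase_subset _ _) hIF
  rw [card_union_of_disjoint hIF, Nat.odd_add] at h
  rcases Nat.even_or_odd #I with hIe | hIo
  · have hFo : Odd #F := by rwa [← Nat.not_even_iff_odd, ← h, Nat.not_odd_iff_even]
    obtain ⟨u, hu, hum, hIu⟩ := (hI.1 hIe).exists_erase_erase hm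
    obtain ⟨y, hy, huy⟩ := hI_F u hu
    exact .union_of_erase hImF (mem_erase.2 ⟨hum, hu⟩) hy huy hIu (hF.2 hFo y hy)
  · exact (hI.2 hIo m hm).union (hF.1 (h.1 hIo)) hImF

theorem union (hIF : Disjoint I F) (hI_F : ∀ x ∈ I, ∃ y ∈ F, SymmGen (· < ·) x y)
    (hF_I : ∀ x ∈ F, ∃ y ∈ I, SymmGen (· < ·) x y) (hI : NearlyChainPartitionable I)
    (hF : NearlyChainPartitionable F) : NearlyChainPartitionable (I ∪ F) := by
  refine ⟨chainPartitionable_union hIF hI_F hI hF, fun h m hm => ?_⟩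
  rcases mem_union.1 hm with hm | hm
  · exact chainPartitionable_union_erase hIF hI_F hI hF h hm
  · rw [union_comm] at h ⊢
    exact chainPartitionable_union_erase hIF.symm hF_I hF hI h hm

end NearlyChainPartitionable

end Preorder

namespace Finset

variable {α : Type*} {s : Finset α} {a b : α}

theorem isSublattice_filter_le [Lattice α] [DecidablePred (a ≤ ·)]
    (hs : IsSublattice (s : Set α)) : IsSublattice (s.filter (a ≤ ·) : Set α) where
  supClosed x hx y hy := by
    simp only [coe_filter, Set.mem_ofPred_eq] at hx hy ⊢
    exact ⟨hs.supClosed hx.1 hy.1, hx.2.trans le_sup_left⟩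
  infClosed x hx y hy := by
    simp only [coe_filter, Set.mem_ofPred_eq] at hx hy ⊢
    exact ⟨hs.infClosed hx.1 hy.1, le_inf hx.2 hy.2⟩

theorem isSublattice_filter_not_le [DistribLattice α] [DecidablePred (a ≤ ·)]
    (hs : IsSublattice (s : Set α)) (ha : a ∈ s) (hab : a ≠ b)
    (hmin : ∀ x ∈ s, x < a → x = b) : IsSublattice (s.filter (¬ a ≤ ·) : Set α) where
  supClosed x hx y hy := by
    simp only [coe_filter, Set.mem_ofPred_eq] at hx hy ⊢
    refine ⟨hs.supClosed hx.1 hy.1, fun hxy => hab ?_⟩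
    have hinf : ∀ z ∈ s, ¬a ≤ z → a ⊓ z = b := fun z hz haz =>
      hmin _ (hs.infClosed ha hz) (inf_lt_left.2 haz)
    calc a = a ⊓ (x ⊔ y) := (inf_eq_left.2 hxy).symm
      _ = a ⊓ x ⊔ a ⊓ y := inf_sup_left _ _ _
      _ = b := by rw [hinf x hx.1 hx.2, hinf y hy.1 hy.2, sup_idem]
  infClosed x hx y hy := by
    simp only [coe_filter, Set.mem_ofPred_eq] at hx hy ⊢
    exact ⟨hs.infClosed hx.1 hy.1, fun h => hx.2 (h.trans inf_le_left)⟩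

end Finset

theorem nearlyChainPartitionable_of_isSublattice {α : Type*} [DistribLattice α] [DecidableEq α]
    {s : Finset α} (hs : IsSublattice (s : Set α)) : NearlyChainPartitionable s := by
  classical
  induction s using Finset.strongInduction with
  | H s ih =>
  rcases le_or_gt #s 1 with hs1 | hs1
  · exact .of_card_le_one hs1
  have hne : s.Nonempty := card_pos.1 (by omega)
  set b := s.inf' hne id
  have hb : b ∈ s := hs.infClosed.finsetInf'_mem hne fun x hx => hx
  obtain ⟨a, ha⟩ := (s.erase b).exists_minimal (by rw [← card_pos, card_erase_of_mem hb]; omega)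
  obtain ⟨hab, has⟩ := mem_erase.1 ha.prop
  have hmin : ∀ x ∈ s, x < a → x = b := fun x hx hxa =>
    by_contra fun hxb => ha.not_lt (mem_erase.2 ⟨hxb, hx⟩) hxa
  have hba : b < a := (inf'_le id has).lt_of_ne (Ne.symm hab)
  have hIF : ∀ x ∈ s.filter (¬ a ≤ ·), ∃ y ∈ s.filter (a ≤ ·), SymmGen (· < ·) x y := by
    intro x hx
    rw [mem_filter] at hx
    exact ⟨x ⊔ a, mem_filter.2 ⟨hs.supClosed hx.1 has, le_sup_right⟩, Or.inl (left_lt_sup.2 hx.2)⟩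
  have hFI : ∀ y ∈ s.filter (a ≤ ·), ∃ x ∈ s.filter (¬ a ≤ ·), SymmGen (· < ·) y x :=
    fun y hy => ⟨b, mem_filter.2 ⟨hb, hba.not_ge⟩, Or.inr (hba.trans_le (mem_filter.1 hy).2)⟩
  have hI := ih _ (filter_ssubset.2 ⟨a, has, not_not.2 le_rfl⟩)
    (isSublattice_filter_not_le hs has hab hmin)
  have hF := ih _ (filter_ssubset.2 ⟨b, hb, hba.not_ge⟩) (isSublattice_filter_le hs)
  have := hI.union (disjoint_filter_filter_not s s _).symm hIF hFI hF
  rwa [union_comm, filter_union_filter_not_eq] at this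

/-- Sands' Matching Theorem: every finite distributive lattice with an even
number of elements can be partitioned into two-element chains. -/
theorem sands_matching (L : Type*) [DistribLattice L] [Fintype L]
    (h : Even (Fintype.card L)) :
    ∃ C : Finset (L × L), (∀ p ∈ C, p.1 < p.2) ∧
      ∀ x : L, ∃! p : L × L, p ∈ C ∧ (x = p.1 ∨ x = p.2) := by
  classical
  have hL := (nearlyChainPartitionable_of_isSublattice (s := (univ : Finset L))
    (by simp)).1 (by rwa [card_univ])
  obtain ⟨C, hlt, -, hcov⟩ := hL.exists_finset
  exact ⟨C, hlt, fun x => hcov x (mem_univ x)⟩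
end

section
/- If L is a finite distributive lattice with an odd number of elements the greatest element 1, then L \ {1} can be partitioned into two-element chains. -/
/-!
If `a ⋖ j ≤ b` in a distributive lattice, then `j` is sup-prime in `[a, b]`, so `[a, b]` is the
disjoint union of `[a, m]` and `[j, b]`, where `m` is the largest element of `[a, b]` not above `j`.
By induction on the size of intervals we show more than the theorem: an interval of even size is
partitioned into two-element chains, and so is an interval of odd size with any one element
removed. Every element of `[a, m]` lies below `b` and every element of `[j, b]` lies above `a`, so
when the two halves leave one element each, these two form a further chain; if the removed element
sits in a half of even size, its chain is broken up and its partner is paired across with `b`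
or `a`.
-/

open Set

namespace SandsMatching

variable {α : Type*}

section Preorder

variable [Preorder α] {S T : Set α} {x y : α}

/-- `S` is partitioned into the two-element chains `{x, f x}`, `x ∈ S`. -/
def ChainMatchable (S : Set α) : Prop :=
  ∃ f : α → α, ∀ x ∈ S, f x ∈ S ∧ f (f x) = x ∧ (x < f x ∨ f x < x)

theorem chainMatchable_empty : ChainMatchable (∅ : Set α) :=
  ⟨id, fun _ h => h.elim⟩

theorem chainMatchable_pair (h : x < y ∨ y < x) : ChainMatchable ({x, y} : Set α) := by
  classical
  have hxy : x ≠ y := by rintro rfl; simp at h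
  refine ⟨Equiv.swap x y, ?_⟩
  rintro z (rfl | rfl)
  · simp [h]
  · simp [Equiv.swap_apply_right, h.symm]

theorem ChainMatchable.union (hST : Disjoint S T) (hS : ChainMatchable S)
    (hT : ChainMatchable T) : ChainMatchable (S ∪ T) := by
  classical
  obtain ⟨f, hf⟩ := hS
  obtain ⟨g, hg⟩ := hT
  refine ⟨S.piecewise f g, ?_⟩
  rintro x (hx | hx)
  · obtain ⟨hfx, hffx, hcmp⟩ := hf x hx
    simp [piecewise_eq_of_mem, hx, hfx, hffx, hcmp]
  · have hxS : x ∉ S := disjoint_right.1 hST hx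
    obtain ⟨hgx, hggx, hcmp⟩ := hg x hx
    have hgxS : g x ∉ S := disjoint_right.1 hST hgx
    simp [piecewise_eq_of_notMem, hxS, hgxS, hgx, hggx, hcmp]

theorem ChainMatchable.exists_diff_pair (hS : ChainMatchable S) (hy : y ∈ S) :
    ∃ z ∈ S, (y < z ∨ z < y) ∧ ChainMatchable (S \ {y, z}) := by
  obtain ⟨f, hf⟩ := hS
  refine ⟨f y, (hf y hy).1, (hf y hy).2.2, f, ?_⟩
  rintro x ⟨hx, hxy⟩
  obtain ⟨hfx, hffx, hcmp⟩ := hf x hx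
  refine ⟨⟨hfx, ?_⟩, hffx, hcmp⟩
  simp only [mem_insert_iff, mem_singleton_iff, not_or] at hxy ⊢
  refine ⟨fun h => hxy.2 ?_, fun h => hxy.1 ?_⟩
  · rw [← hffx, h]
  · rw [← hffx, h, (hf y hy).2.1]

theorem ChainMatchable.exists_finset [Finite α] (hS : ChainMatchable S) :
    ∃ C : Finset (α × α), (∀ p ∈ C, p.1 < p.2 ∧ p.1 ∈ S ∧ p.2 ∈ S) ∧
      ∀ x ∈ S, ∃! p : α × α, p ∈ C ∧ (x = p.1 ∨ x = p.2) := by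
  obtain ⟨f, hf⟩ := hS
  refine ⟨(toFinite ((fun x => (x, f x)) '' {x ∈ S | x < f x})).toFinset, ?_, ?_⟩
  · simp only [Finite.mem_toFinset]
    rintro _ ⟨x, ⟨hx, hlt⟩, rfl⟩
    exact ⟨hlt, hx, (hf x hx).1⟩
  · intro x hx
    obtain ⟨hfx, hffx, hcmp⟩ := hf x hx
    simp only [Finite.mem_toFinset]
    rcases hcmp with hlt | hlt
    · refine ⟨(x, f x), ⟨⟨x, ⟨hx, hlt⟩, rfl⟩, Or.inl rfl⟩, ?_⟩
      rintro _ ⟨⟨u, ⟨hu, hult⟩, rfl⟩, rfl | rfl⟩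
      · rfl
      · rw [(hf u hu).2.1] at hlt
        exact absurd hult hlt.asymm
    · refine ⟨(f x, x), ⟨⟨f x, ⟨hfx, by rwa [hffx]⟩, by simp only [hffx]⟩, Or.inr rfl⟩, ?_⟩
      rintro _ ⟨⟨u, ⟨hu, hult⟩, rfl⟩, rfl | rfl⟩
      · exact absurd hult hlt.asymm
      · rw [(hf u hu).2.1]

end Preorder

section PartialOrder

variable [PartialOrder α] {A B S : Set α} {a b y : α}

theorem ChainMatchable.union_diff_singleton (hAB : Disjoint A B) (hA : ChainMatchable A)
    (hy : y ∈ A) (hb : b ∈ B) (hB : ChainMatchable (B \ {b})) (hAb : ∀ x ∈ A, x < b ∨ b < x) :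
    ChainMatchable ((A ∪ B) \ {y}) := by
  obtain ⟨z, hz, hcmp, hA'⟩ := hA.exists_diff_pair hy
  have hyz : y ≠ z := by rintro rfl; simp at hcmp
  have hbA : b ∉ A := disjoint_right.1 hAB hb
  have hzB : z ∉ B := disjoint_left.1 hAB hz
  have hyB : y ∉ B := disjoint_left.1 hAB hy
  have hsplit : (A ∪ B) \ {y} = {z, b} ∪ ((A \ {y, z}) ∪ (B \ {b})) := by
    ext x
    simp only [mem_union, mem_sdiff, mem_insert_iff, mem_singleton_iff]
    grind
  rw [hsplit]
  refine (chainMatchable_pair (hAb z hz)).union ?_ (hA'.union ?_ hB)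
  · simp only [disjoint_insert_left, disjoint_singleton_left, mem_union, mem_sdiff,
      mem_insert_iff, mem_singleton_iff]
    grind
  · exact hAB.mono sdiff_subset sdiff_subset

def ParityMatchable (S : Set α) : Prop :=
  (Even S.ncard → ChainMatchable S) ∧ (Odd S.ncard → ∀ y ∈ S, ChainMatchable (S \ {y}))

theorem parityMatchable_of_subsingleton (hS : S.Subsingleton) : ParityMatchable S := by
  rcases hS.eq_empty_or_singleton with rfl | ⟨x, rfl⟩
  · exact ⟨fun _ => chainMatchable_empty, by simp⟩
  · refine ⟨by simp, fun _ y hy => ?_⟩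
    rw [hy, sdiff_self]
    exact chainMatchable_empty

theorem ParityMatchable.union [Finite α] (hAB : Disjoint A B) (ha : a ∈ A) (hb : b ∈ B)
    (hsub : A ∪ B ⊆ Icc a b) (hA : ParityMatchable A) (hB : ParityMatchable B) :
    ParityMatchable (A ∪ B) := by
  have hlt_b : ∀ x ∈ A, x < b := fun x hx =>
    (hsub (.inl hx)).2.lt_of_ne (ne_of_mem_of_not_mem hx (disjoint_right.1 hAB hb))
  have ha_lt : ∀ x ∈ B, a < x := fun x hx =>
    (hsub (.inr hx)).1.lt_of_ne (ne_of_mem_of_not_mem ha (disjoint_right.1 hAB hx))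
  rw [ParityMatchable, ncard_union_eq hAB]
  constructor
  · intro heven
    rcases Nat.even_or_odd A.ncard with hAe | hAo
    · exact (hA.1 hAe).union hAB (hB.1 (by grind))
    · have hsplit : A ∪ B = {a, b} ∪ ((A \ {a}) ∪ (B \ {b})) := by
        ext x
        simp only [mem_union, mem_sdiff, mem_insert_iff, mem_singleton_iff]
        grind
      rw [hsplit]
      refine (chainMatchable_pair (.inl (hlt_b a ha))).union ?_
        ((hA.2 hAo a ha).union (hAB.mono sdiff_subset sdiff_subset) (hB.2 (by grind) b hb))
      simp only [disjoint_insert_left, disjoint_singleton_left, mem_union, mem_sdiff,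
        mem_singleton_iff]
      grind
  · rintro hodd y (hy | hy)
    · rcases Nat.even_or_odd A.ncard with hAe | hAo
      · exact (hA.1 hAe).union_diff_singleton hAB hy hb (hB.2 (by grind) b hb)
          fun x hx => .inl (hlt_b x hx)
      · rw [union_sdiff_distrib, sdiff_singleton_eq_self (disjoint_left.1 hAB hy)]
        exact (hA.2 hAo y hy).union (hAB.mono_left sdiff_subset) (hB.1 (by grind))
    · rcases Nat.even_or_odd B.ncard with hBe | hBo
      · rw [union_comm]
        exact (hB.1 hBe).union_diff_singleton hAB.symm hy ha (hA.2 (by grind) a ha)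
          fun x hx => .inr (ha_lt x hx)
      · rw [union_sdiff_distrib, sdiff_singleton_eq_self (disjoint_right.1 hAB hy)]
        exact (hA.1 (by grind)).union (hAB.mono_right sdiff_subset) (hB.2 hBo y hy)

end PartialOrder

section DistribLattice

variable [DistribLattice α] {a b j x y : α}

theorem _root_.CovBy.le_or_le_of_le_sup (hj : a ⋖ j) (hx : a ≤ x) (hy : a ≤ y) (h : j ≤ x ⊔ y) :
    j ≤ x ∨ j ≤ y := by
  by_contra! hne
  have hinf : ∀ z, a ≤ z → ¬ j ≤ z → j ⊓ z = a := fun z hz hjz =>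
    (hj.eq_or_eq (le_inf hj.le hz) inf_le_left).resolve_right fun h => hjz (inf_eq_left.1 h)
  apply hj.lt.ne'
  calc j = j ⊓ (x ⊔ y) := (inf_eq_left.2 h).symm
    _ = a := by rw [inf_sup_left, hinf x hx hne.1, hinf y hy hne.2, sup_idem]

theorem exists_Icc_eq_union_Icc [Finite α] (hab : a < b) :
    ∃ m j, a ≤ m ∧ j ≤ b ∧ Disjoint (Icc a m) (Icc j b) ∧ Icc a b = Icc a m ∪ Icc j b := by
  obtain ⟨j, haj, hjb⟩ : ∃ j, a ⋖ j ∧ j ≤ b := exists_covBy_le_of_lt hab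
  set P := {x | a ≤ x ∧ x ≤ b ∧ ¬ j ≤ x}
  have haP : a ∈ P := ⟨le_rfl, hab.le, haj.lt.not_ge⟩
  obtain ⟨m, hmP, hmax⟩ := (toFinite P).exists_maximal ⟨a, haP⟩
  have hle_m : ∀ x ∈ P, x ≤ m := fun x hx =>
    le_sup_right.trans (hmax ⟨hmP.1.trans le_sup_left, sup_le hmP.2.1 hx.2.1,
      fun h => (haj.le_or_le_of_le_sup hmP.1 hx.1 h).elim hmP.2.2 hx.2.2⟩ le_sup_left)
  refine ⟨m, j, hmP.1, hjb, ?_, ?_⟩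
  · exact disjoint_left.2 fun x hxm hxj => hmP.2.2 (hxj.1.trans hxm.2)
  · ext x
    constructor
    · rintro ⟨hax, hxb⟩
      by_cases hjx : j ≤ x
      · exact .inr ⟨hjx, hxb⟩
      · exact .inl ⟨hax, hle_m x ⟨hax, hxb, hjx⟩⟩
    · rintro (⟨hax, hxm⟩ | ⟨hjx, hxb⟩)
      · exact ⟨hax, hxm.trans hmP.2.1⟩
      · exact ⟨haj.le.trans hjx, hxb⟩

theorem parityMatchable_Icc [Finite α] (a b : α) : ParityMatchable (Icc a b) := by
  by_cases hab : a < b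
  · obtain ⟨m, j, ham, hjb, hdisj, hunion⟩ := exists_Icc_eq_union_Icc hab
    have hcard : (Icc a b).ncard = (Icc a m).ncard + (Icc j b).ncard := by
      rw [hunion, ncard_union_eq hdisj]
    have hm : 0 < (Icc a m).ncard := (nonempty_of_mem (left_mem_Icc.2 ham)).ncard_pos
    have hj : 0 < (Icc j b).ncard := (nonempty_of_mem (right_mem_Icc.2 hjb)).ncard_pos
    rw [hunion]
    exact (parityMatchable_Icc a m).union hdisj (left_mem_Icc.2 ham) (right_mem_Icc.2 hjb)
      hunion.symm.subset (parityMatchable_Icc j b)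
  · refine parityMatchable_of_subsingleton fun x hx y hy => ?_
    have hab : a = b := (hx.1.trans hx.2).eq_of_not_lt hab
    subst hab
    exact (le_antisymm hx.2 hx.1).trans (le_antisymm hy.2 hy.1).symm
termination_by (Icc a b).ncard
decreasing_by all_goals omega

end DistribLattice

end SandsMatching

open SandsMatching Set in
/-- If `L` is a finite distributive lattice with an odd number of elements and
greatest element `⊤`, then `L \ {⊤}` can be partitioned into two-element chains. -/
theorem sands_matching_odd (L : Type*) [DistribLattice L] [Fintype L] [OrderTop L]
    (h : Odd (Fintype.card L)) :
    ∃ C : Finset (L × L), (∀ p ∈ C, p.1 < p.2 ∧ p.2 ≠ (⊤ : L)) ∧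
      ∀ x : L, x ≠ ⊤ → ∃! p : L × L, p ∈ C ∧ (x = p.1 ∨ x = p.2) := by
  obtain ⟨a, ha⟩ := Finite.exists_ge (id : L → L)
  have huniv : Icc a ⊤ = univ := eq_univ_of_forall fun x => ⟨ha x, le_top⟩
  have hodd : Odd (Icc a ⊤).ncard := by rwa [huniv, ncard_univ, Nat.card_eq_fintype_card]
  obtain ⟨C, hC, hcover⟩ :=
    ((parityMatchable_Icc a ⊤).2 hodd ⊤ (huniv ▸ mem_univ _)).exists_finset
  refine ⟨C, fun p hp => ⟨(hC p hp).1, ?_⟩, fun x hx => hcover x ?_⟩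
  · simpa [huniv] using (hC p hp).2.2
  · simp [huniv, hx]
end

section
/- Every finite distributive lattice is ranked: for every element x, every maximal chain with greatest element x has length equal to the height of x. -/
/-! Height is strictly monotone in any finite poset, and in a finite weakly lower modular lattice
(for instance a distributive one) it grows by exactly one along each covering `a ⋖ b`: take the
top step `c ⋖ b` of a longest chain ending at `b`; if `c ≠ a` then `c ⊔ a = b`, so `c ⊓ a ⋖ c`,
and induction on the height through `c` gives
`heightOf b ≤ heightOf c + 1 ≤ heightOf (c ⊓ a) + 2 ≤ heightOf a + 1`.
A maximal chain ending at `x` climbs by coverings from a minimal element, which has height `0`,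
so its length is the height of `x`. -/

noncomputable def heightOf {L : Type*} [PartialOrder L] (x : L) : ℕ :=
  sSup {n | ∃ C : Finset L, IsChain (· ≤ ·) (C : Set L) ∧ x ∈ C ∧
    (∀ y ∈ C, y ≤ x) ∧ C.card - 1 = n}

section PartialOrder

variable {L : Type*} [PartialOrder L]

def IsChainTo (x : L) (C : Finset L) : Prop :=
  IsChain (· ≤ ·) (C : Set L) ∧ x ∈ C ∧ ∀ y ∈ C, y ≤ x

lemma isChainTo_singleton (x : L) : IsChainTo x {x} :=
  ⟨by simp, Finset.mem_singleton_self x, by simp⟩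

lemma IsChainTo.insert_of_lt [DecidableEq L] {a b : L} {C : Finset L} (hC : IsChainTo a C)
    (hab : a < b) : IsChainTo b (insert b C) := by
  obtain ⟨hchain, -, hle⟩ := hC
  refine ⟨?_, Finset.mem_insert_self b C, fun y hy => ?_⟩
  · rw [Finset.coe_insert]
    exact hchain.insert fun y hy _ => Or.inr ((hle y hy).trans hab.le)
  · rcases Finset.mem_insert.1 hy with rfl | hy
    exacts [le_rfl, (hle y hy).trans hab.le]

lemma IsChain.exists_isGreatest {s : Finset L} (hs : IsChain (· ≤ ·) (s : Set L))
    (hne : s.Nonempty) : ∃ c, IsGreatest (s : Set L) c := by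
  obtain ⟨c, hc⟩ := Finset.exists_maximal hne
  refine ⟨c, hc.prop, fun y hy => ?_⟩
  rcases hs.total hy hc.prop with h | h
  exacts [h, hc.le_of_ge hy h]

lemma Maximal.exists_covBy_erase [DecidableEq L] {x : L} {C : Finset L}
    (hC : Maximal (IsChainTo x) C) (hne : (C.erase x).Nonempty) :
    ∃ c, c ⋖ x ∧ Maximal (IsChainTo c) (C.erase x) := by
  obtain ⟨hchain, hxC, hle⟩ := hC.prop
  have hchain' : IsChain (· ≤ ·) (C.erase x : Set L) :=
    hchain.mono (Finset.coe_subset.2 (Finset.erase_subset x C))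
  obtain ⟨c, hcC, hcge⟩ := hchain'.exists_isGreatest hne
  have hcx : c < x :=
    lt_of_le_of_ne (hle c (Finset.mem_of_mem_erase hcC)) (Finset.ne_of_mem_erase hcC)
  refine ⟨c, ⟨hcx, fun w hcw hwx => ?_⟩, ⟨hchain', hcC, fun y hy => hcge hy⟩, fun D hD hCD => ?_⟩
  · have hw : IsChainTo x (insert w C) := by
      refine ⟨?_, Finset.mem_insert_of_mem hxC, fun y hy => ?_⟩
      · rw [Finset.coe_insert]
        refine hchain.insert fun y hy _ => ?_
        rcases eq_or_ne y x with rfl | hyx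
        · exact Or.inl hwx.le
        · exact Or.inr ((hcge (Finset.mem_erase.2 ⟨hyx, hy⟩)).trans hcw.le)
      · rcases Finset.mem_insert.1 hy with rfl | hy
        exacts [hwx.le, hle y hy]
    have hwC : w ∈ C := hC.2 hw (Finset.subset_insert w C) (Finset.mem_insert_self w C)
    exact hcw.not_ge (hcge (Finset.mem_erase.2 ⟨hwx.ne, hwC⟩))
  · have hDC : insert x D ⊆ C :=
      hC.2 (hD.insert_of_lt hcx) (Finset.subset_insert_iff.2 hCD)
    exact fun y hy => Finset.mem_erase.2
      ⟨((hD.2.2 y hy).trans_lt hcx).ne, hDC (Finset.mem_insert_of_mem hy)⟩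

end PartialOrder

section Finite

variable {L : Type*} [PartialOrder L] [Finite L]

lemma bddAbove_chain_lengths (x : L) :
    BddAbove {n | ∃ C : Finset L, IsChain (· ≤ ·) (C : Set L) ∧ x ∈ C ∧
      (∀ y ∈ C, y ≤ x) ∧ C.card - 1 = n} :=
  (Set.finite_range fun C : Finset L => C.card - 1).bddAbove.mono <| by
    rintro _ ⟨C, -, -, -, rfl⟩
    exact ⟨C, rfl⟩

lemma IsChainTo.card_sub_one_le_heightOf {x : L} {C : Finset L} (hC : IsChainTo x C) :
    C.card - 1 ≤ heightOf x :=
  le_csSup (bddAbove_chain_lengths x) ⟨C, hC.1, hC.2.1, hC.2.2, rfl⟩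

lemma exists_isChainTo_card_sub_one_eq_heightOf (x : L) :
    ∃ C, IsChainTo x C ∧ C.card - 1 = heightOf x := by
  have hx := isChainTo_singleton x
  obtain ⟨C, hchain, hxC, hle, hC⟩ :=
    Nat.sSup_mem (by exact ⟨0, {x}, hx.1, hx.2.1, hx.2.2, rfl⟩) (bddAbove_chain_lengths x)
  exact ⟨C, ⟨hchain, hxC, hle⟩, hC⟩

lemma heightOf_strictMono : StrictMono (heightOf : L → ℕ) := by
  classical
  intro a b hab
  obtain ⟨C, hC, hcard⟩ := exists_isChainTo_card_sub_one_eq_heightOf a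
  have hbC : b ∉ C := fun h => (hC.2.2 b h).not_gt hab
  have hlen := (hC.insert_of_lt hab).card_sub_one_le_heightOf
  rw [Finset.card_insert_of_notMem hbC] at hlen
  have := Finset.card_pos.2 ⟨a, hC.2.1⟩
  omega

lemma IsChainTo.maximal_of_card_sub_one_eq_heightOf {x : L} {C : Finset L} (hC : IsChainTo x C)
    (hcard : C.card - 1 = heightOf x) : Maximal (IsChainTo x) C := by
  refine ⟨hC, fun D hD hCD => (Finset.eq_of_subset_of_card_le hCD ?_).ge⟩
  have := hD.card_sub_one_le_heightOf
  have := Finset.card_pos.2 ⟨x, hC.2.1⟩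
  omega

lemma exists_covBy_heightOf_le_add_one {b : L} (hb : heightOf b ≠ 0) :
    ∃ c, c ⋖ b ∧ heightOf b ≤ heightOf c + 1 := by
  classical
  obtain ⟨C, hC, hcard⟩ := exists_isChainTo_card_sub_one_eq_heightOf b
  have hne : (C.erase b).Nonempty := by
    rw [← Finset.card_pos, Finset.card_erase_of_mem hC.2.1]
    omega
  obtain ⟨c, hcb, hc⟩ := (hC.maximal_of_card_sub_one_eq_heightOf hcard).exists_covBy_erase hne
  refine ⟨c, hcb, ?_⟩
  have := hc.prop.card_sub_one_le_heightOf
  rw [Finset.card_erase_of_mem hC.2.1] at this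
  omega

theorem Maximal.card_sub_one_eq_heightOf
    (hgraded : ∀ a b : L, a ⋖ b → heightOf b = heightOf a + 1) {x : L} {C : Finset L}
    (hC : Maximal (IsChainTo x) C) : C.card - 1 = heightOf x := by
  classical
  induction C using Finset.strongInduction generalizing x with
  | H C ih =>
  have hxC := hC.prop.2.1
  rcases (C.erase x).eq_empty_or_nonempty with hempty | hne
  · obtain rfl : C = {x} :=
      ((Finset.erase_eq_empty_iff C x).1 hempty).resolve_left (Finset.ne_empty_of_mem hxC)
    suffices heightOf x = 0 by simp [this]
    by_contra hx
    obtain ⟨c, hcx, -⟩ := exists_covBy_heightOf_le_add_one hx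
    have hc : c ∈ ({x} : Finset L) := hC.2 ((isChainTo_singleton c).insert_of_lt hcx.lt)
      (by simp) (Finset.mem_insert_of_mem (Finset.mem_singleton_self c))
    exact hcx.ne (Finset.mem_singleton.1 hc)
  · obtain ⟨c, hcx, hc⟩ := hC.exists_covBy_erase hne
    have hlen := ih _ (Finset.erase_ssubset hxC) hc
    have hpos := hne.card_pos
    rw [Finset.card_erase_of_mem hxC] at hlen hpos
    rw [hgraded c x hcx]
    omega

end Finite

section WeakLowerModular

variable {L : Type*} [Lattice L] [IsWeakLowerModularLattice L] [Finite L]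

theorem heightOf_le_add_one_of_covBy {a b : L} (hab : a ⋖ b) : heightOf b ≤ heightOf a + 1 := by
  induction hn : heightOf b using Nat.strong_induction_on generalizing a b with
  | _ n ih =>
  subst hn
  rcases eq_or_ne (heightOf b) 0 with h0 | h0
  · omega
  obtain ⟨c, hcb, hc⟩ := exists_covBy_heightOf_le_add_one h0
  rcases eq_or_ne c a with rfl | hca
  · exact hc
  have hsup : c ⊔ a = b := hcb.wcovBy.sup_eq hab.wcovBy hca
  have hinf : c ⊓ a ⋖ c := inf_covBy_of_covBy_sup_of_covBy_sup_left (hsup ▸ hcb) (hsup ▸ hab)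
  have hc' := ih _ (heightOf_strictMono hcb.lt) hinf rfl
  have ha := heightOf_strictMono (inf_lt_right.2 fun hac => hab.2 (hac.lt_of_ne hca.symm) hcb.lt)
  omega

theorem heightOf_eq_add_one_of_covBy {a b : L} (hab : a ⋖ b) : heightOf b = heightOf a + 1 :=
  le_antisymm (heightOf_le_add_one_of_covBy hab) (heightOf_strictMono hab.lt)

end WeakLowerModular

/-- Every finite distributive lattice is ranked: for every element `x`, every
maximal chain with greatest element `x` has length equal to the height of `x`. -/
theorem finite_distrib_lattice_ranked {L : Type*} [DistribLattice L] [Fintype L]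
    (x : L) (C : Finset L) (hchain : IsChain (· ≤ ·) (C : Set L))
    (hxC : x ∈ C) (hgreatest : ∀ y ∈ C, y ≤ x)
    (hmax : ∀ D : Finset L, IsChain (· ≤ ·) (D : Set L) → x ∈ D →
      (∀ y ∈ D, y ≤ x) → C ⊆ D → C = D) :
    C.card - 1 = heightOf x :=
  have hC : Maximal (IsChainTo x) C :=
    ⟨⟨hchain, hxC, hgreatest⟩, fun D hD hCD => (hmax D hD.1 hD.2.1 hD.2.2 hCD).ge⟩
  hC.card_sub_one_eq_heightOf fun _ _ => heightOf_eq_add_one_of_covBy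
end

section
/- Let P be a finite poset partitioned into disjoint chains T1, ..., Ts with s ≥ 3, such that whenever p ∈ Tj, q ∈ Tk with j ≠ k and p < q, we have P = ↑p ∪ ↓q. Then there exist subsets R1, ..., Rn of P such that P is the ordinal sum R1 ⊕ ... ⊕ Rn, and for each i, either Ri is disjoint from some Tj, or any two elements of Ri lying in different chains Tj, Tk are incomparable. -/
/-!
The blocks are the connected components of the incomparability graph: elements of different
components are comparable, and a path of incomparabilities that avoids the component of `c` stays
on one side of `c`, so the components are totally ordered and `P` is their ordinal sum.

Call `p < q` a cross pair if `p` and `q` lie in different chains. It remains to show that a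
component meeting every chain has no cross pair; we prove this for every set `C` that is connected
in its own incomparability graph and meets every chain, by induction on `#C`. Take a cross pair
`x < y` of `C` with `y` minimal and then `x` maximal. By the Daykin–Daykin property every element
of `C` is `< y` or `> x`, and not both. Below `y` all comparabilities are monochromatic, so
deleting a non-maximal element of `C ∩ Iio y` keeps `C` connected and keeps the cross pair
`x < y`; by induction `C ∩ Iio y` is an antichain. An incomparable pair `a < y`, `b > x`, which
exists by connectivity, has `a` in the chain of `y` and `b` in that of `x`, and an element `r` of a
third chain lies above `a`. Deleting `x`, all of whose neighbours lie in the antichain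
`C ∩ Iio y` next to `a`, leaves a smaller connected set meeting every chain with cross pair `a < r`.
-/

open Relation Set

local infix:50 " ∥ " => IncompRel (· ≤ ·)

theorem Relation.ReflTransGen.exists_rel_of_not {α : Type*} {r : α → α → Prop} {p : α → Prop}
    {a b : α} (h : ReflTransGen r a b) (ha : p a) (hb : ¬ p b) : ∃ c d, r c d ∧ p c ∧ ¬ p d := by
  induction h with
  | refl => exact absurd ha hb
  | @tail c d _ hcd ih =>
    by_cases hc : p c
    · exact ⟨c, d, hcd, hc, hb⟩
    · exact ih hc

theorem Set.SurjOn.diff_singleton {α β : Type*} {f : α → β} {s : Set α} {t : Set β} {u z : α}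
    (h : SurjOn f s t) (hz : z ∈ s) (hzu : z ≠ u) (hf : f z = f u) : SurjOn f (s \ {u}) t := by
  intro b hb
  obtain ⟨v, hv, rfl⟩ := h hb
  by_cases hvu : v = u
  · exact ⟨z, ⟨hz, hzu⟩, hvu ▸ hf⟩
  · exact ⟨v, ⟨hv, hvu⟩, rfl⟩

section Incomparability

variable {P : Type*} [PartialOrder P] {C : Set P} {a b x y : P}

abbrev IncompReach (C : Set P) : P → P → Prop :=
  ReflTransGen fun a b => a ∈ C ∧ b ∈ C ∧ a ∥ b

def IncompConnected (C : Set P) : Prop :=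
  ∀ a ∈ C, ∀ b ∈ C, IncompReach C a b

theorem IncompReach.symm (h : IncompReach C a b) : IncompReach C b a := by
  induction h with
  | refl => exact .refl
  | tail _ hcd ih => exact .head ⟨hcd.2.1, hcd.1, hcd.2.2.symm⟩ ih

theorem IncompReach.restrict {D : Set P} (hD : ∀ v, IncompReach univ a v → v ∈ D)
    (h : IncompReach univ a b) : IncompReach D a b := by
  induction h with
  | refl => exact .refl
  | @tail c d hac hcd ih => exact ih.tail ⟨hD c hac, hD d (hac.tail hcd), hcd.2.2⟩

/-- Replacing `u` by `z` turns a path in `C` into a path in `C \ {u}`. -/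
theorem IncompConnected.diff_singleton {u z : P} (hC : IncompConnected C) (hz : z ∈ C)
    (hzu : z ≠ u) (hdom : ∀ w ∈ C, u ∥ w → w ≠ z → z ∥ w) : IncompConnected (C \ {u}) := by
  classical
  have hzC : z ∈ C \ {u} := ⟨hz, hzu⟩
  have hfrom_z : ∀ w ∈ C, u ∥ w → IncompReach (C \ {u}) z w := by
    intro w hw huw
    by_cases hwz : w = z
    · rw [hwz]
    · exact .single ⟨hzC, ⟨hw, huw.ne.symm⟩, hdom w hw huw hwz⟩
  let f : P → P := fun v => if v = u then z else v
  have hstep : ∀ c d, c ∈ C ∧ d ∈ C ∧ c ∥ d → IncompReach (C \ {u}) (f c) (f d) := by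
    rintro c d ⟨hc, hd, hcd⟩
    by_cases hcu : c = u
    · subst hcu
      simpa [f, hcd.ne.symm] using hfrom_z d hd hcd
    by_cases hdu : d = u
    · subst hdu
      simpa [f, hcu] using (hfrom_z c hc hcd.symm).symm
    · simpa [f, hcu, hdu] using ReflTransGen.single ⟨⟨hc, hcu⟩, ⟨hd, hdu⟩, hcd⟩
  intro a ha b hb
  have hab := ReflTransGen.lift' f hstep _ _ (hC a ha.1 b hb.1)
  simpa only [Function.onFun, f, if_neg (show a ≠ u from ha.2), if_neg (show b ≠ u from hb.2)]
    using hab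

theorem IncompReach.lt_of_lt {c : P} (h : IncompReach univ a b) (hac : ¬ IncompReach univ a c)
    (hca : c < a) : c < b := by
  induction h with
  | refl => exact hca
  | @tail b' d hab' hb'd ih =>
    have had := hab'.tail hb'd
    rcases lt_or_eq_or_gt_or_incompRel c d with hcd | rfl | hdc | hcd
    · exact hcd
    · exact absurd had hac
    · exact absurd (hdc.trans ih).le hb'd.2.2.2
    · exact absurd (had.tail ⟨trivial, trivial, hcd.symm⟩) hac

theorem IncompReach.lt_or_gt_of_not (h : ¬ IncompReach univ x y) : x < y ∨ y < x := by
  rcases lt_or_eq_or_gt_or_incompRel x y with hxy | rfl | hyx | hxy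
  · exact Or.inl hxy
  · exact absurd .refl h
  · exact Or.inr hyx
  · exact absurd (.single ⟨trivial, trivial, hxy⟩) h

end Incomparability

section CrossFree

variable {P κ : Type*} [PartialOrder P] {ch : P → κ} {C : Set P} {x y : P}

def DaykinDaykin (ch : P → κ) : Prop :=
  ∀ p q, ch p ≠ ch q → p < q → ∀ r, p ≤ r ∨ r ≤ q

def CrossFree (ch : P → κ) (C : Set P) : Prop :=
  ∀ p ∈ C, ∀ q ∈ C, p < q → ch p = ch q

theorem DaykinDaykin.lt_or_lt (hdd : DaykinDaykin ch) (hxy : x < y) (hne : ch x ≠ ch y) (v : P) :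
    v < y ∨ x < v := by
  rcases eq_or_ne v x with rfl | hvx
  · exact Or.inl hxy
  rcases eq_or_ne v y with rfl | hvy
  · exact Or.inr hxy
  exact (hdd x y hne hxy v).symm.imp (lt_of_le_of_ne · hvy) (lt_of_le_of_ne' · hvx)

theorem CrossFree.incompRel (h : CrossFree ch C) {p q : P} (hp : p ∈ C) (hq : q ∈ C)
    (hpq : ch p ≠ ch q) : p ∥ q := by
  have hne : p ≠ q := fun e => hpq (congrArg ch e)
  exact ⟨fun hle => hpq (h p hp q hq (lt_of_le_of_ne hle hne)),
    fun hle => hpq (h q hq p hp (lt_of_le_of_ne hle hne.symm)).symm⟩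

theorem not_incompRel_of_color_eq (hchain : ∀ j, IsChain (· ≤ ·) (ch ⁻¹' {j})) {a b : P}
    (h : ch a = ch b) : ¬ a ∥ b :=
  fun hab => ((hchain (ch b)).total h rfl).elim hab.1 hab.2

/-- `y` is a minimal top of a cross pair of `C`, and `x` a maximal bottom of a cross pair with
top `y`. -/
structure IsExtremalCrossPair (ch : P → κ) (C : Set P) (x y : P) : Prop where
  left_mem : x ∈ C
  right_mem : y ∈ C
  lt : x < y
  color_ne : ch x ≠ ch y
  crossFree_below : CrossFree ch (C ∩ Iio y)
  color_eq_of_lt_of_lt : ∀ v ∈ C, x < v → v < y → ch v = ch y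

theorem exists_isExtremalCrossPair (hC : C.Finite) (h : ¬ CrossFree ch C) :
    ∃ x y, IsExtremalCrossPair ch C x y := by
  obtain ⟨p, hp, q, hq, hpq, hne⟩ : ∃ p ∈ C, ∃ q ∈ C, p < q ∧ ch p ≠ ch q := by
    simpa [CrossFree] using h
  obtain ⟨y, hymin⟩ :=
    (hC.subset (sep_subset C fun q => ∃ p ∈ C, p < q ∧ ch p ≠ ch q)).exists_minimal
      ⟨q, hq, p, hp, hpq, hne⟩
  obtain ⟨hyC, p', hp', hp'y, hne'⟩ := hymin.prop
  obtain ⟨x, hxmax⟩ :=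
    (hC.subset (sep_subset C fun p => p < y ∧ ch p ≠ ch y)).exists_maximal ⟨p', hp', hp'y, hne'⟩
  obtain ⟨hxC, hxy, hxne⟩ := hxmax.prop
  refine ⟨x, y, hxC, hyC, hxy, hxne, fun u hu v hv huv => ?_, fun v hv hxv hvy => ?_⟩
  · by_contra hne
    exact hymin.not_lt ⟨hv.1, u, hu.1, huv, hne⟩ hv.2
  · by_contra hne
    exact hxmax.not_gt ⟨hv, hvy, hne⟩ hxv

namespace IsExtremalCrossPair

variable (h : IsExtremalCrossPair ch C x y)
include h

theorem not_lt_of_lt {v : P} (hv : v ∈ C) (hxv : x < v) : ¬ v < y := fun hvy =>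
  h.color_ne ((h.crossFree_below x ⟨h.left_mem, h.lt⟩ v ⟨hv, hvy⟩ hxv).trans
    (h.color_eq_of_lt_of_lt v hv hxv hvy))

/-- Holds because comparabilities below `y` are monochromatic. -/
theorem incompRel_of_lt (hchain : ∀ j, IsChain (· ≤ ·) (ch ⁻¹' {j})) {v z w : P} (hv : v ∈ C)
    (hz : z ∈ C) (hw : w ∈ C) (hvz : v < z) (hzy : z < y) (hvw : v ∥ w) (hwz : w ≠ z) :
    z ∥ w := by
  refine ⟨fun hzw => hvw.1 (hvz.le.trans hzw), fun hwz' => ?_⟩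
  have hwz : w < z := lt_of_le_of_ne hwz' hwz
  have hcol : ch v = ch w :=
    (h.crossFree_below v ⟨hv, hvz.trans hzy⟩ z ⟨hz, hzy⟩ hvz).trans
      (h.crossFree_below w ⟨hw, hwz.trans hzy⟩ z ⟨hz, hzy⟩ hwz).symm
  exact not_incompRel_of_color_eq hchain hcol hvw

theorem isAntichain_below (hchain : ∀ j, IsChain (· ≤ ·) (ch ⁻¹' {j}))
    (hconn : IncompConnected C) (hsurj : SurjOn ch C univ)
    (ih : ∀ u ∈ C, IncompConnected (C \ {u}) → SurjOn ch (C \ {u}) univ →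
      CrossFree ch (C \ {u})) :
    IsAntichain (· ≤ ·) (C ∩ Iio y) := by
  intro v hv z hz hvz hle
  have hlt : v < z := lt_of_le_of_ne hle hvz
  have hvx : v ≠ x := by
    rintro rfl
    exact h.not_lt_of_lt hz.1 hlt hz.2
  have hcross := ih v hv.1
    (hconn.diff_singleton hz.1 hvz.symm fun w hw hvw hwz =>
      h.incompRel_of_lt hchain hv.1 hz.1 hw hlt hz.2 hvw hwz)
    (hsurj.diff_singleton hz.1 hvz.symm (h.crossFree_below v hv z hz hlt).symm)
  exact h.color_ne (hcross x ⟨h.left_mem, hvx.symm⟩ y ⟨h.right_mem, hv.2.ne'⟩ h.lt)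

theorem exists_incompRel (hdd : DaykinDaykin ch) (hconn : IncompConnected C) :
    ∃ a ∈ C, a < y ∧ ∃ b ∈ C, x < b ∧ a ∥ b := by
  obtain ⟨a, b, ⟨ha, hb, hab⟩, hay, hby⟩ :=
    (hconn x h.left_mem y h.right_mem).exists_rel_of_not (p := (· < y)) h.lt (lt_irrefl y)
  exact ⟨a, ha, hay, b, hb, (hdd.lt_or_lt h.lt h.color_ne b).resolve_left hby, hab⟩

theorem color_eq_of_incompRel (hdd : DaykinDaykin ch) {a b : P} (ha : a ∈ C) (hay : a < y)
    (hb : b ∈ C) (hxb : x < b) (hab : a ∥ b) : ch a = ch y ∧ ch b = ch x := by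
  constructor
  · by_contra hne
    rcases hdd a y hne hay b with hle | hle
    · exact hab.1 hle
    · exact h.not_lt_of_lt hb hxb (lt_of_le_of_ne hle fun e => hab.not_lt (e ▸ hay))
  · by_contra hne
    rcases hdd x b (Ne.symm hne) hxb a with hle | hle
    · exact h.not_lt_of_lt ha (lt_of_le_of_ne hle fun e => hab.not_lt (e ▸ hxb)) hay
    · exact hab.1 hle

theorem lt_of_color_ne (hdd : DaykinDaykin ch) (hanti : IsAntichain (· ≤ ·) (C ∩ Iio y))
    {a b r : P} (ha : a ∈ C) (hay : a < y) (hb : b ∈ C) (hxb : x < b) (hab : a ∥ b)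
    (hr : r ∈ C) (hrx : ch r ≠ ch x) (hry : ch r ≠ ch y) : x < r := by
  refine (hdd.lt_or_lt h.lt h.color_ne r).resolve_left fun hry' => ?_
  obtain ⟨hca, hcb⟩ := h.color_eq_of_incompRel hdd ha hay hb hxb hab
  rcases hdd r y hry hry' b with hrb | hby
  · have hrb : r < b := lt_of_le_of_ne hrb fun e => hrx (e ▸ hcb)
    rcases hdd r b (hcb ▸ hrx) hrb a with hra | hba
    · exact hanti ⟨hr, hry'⟩ ⟨ha, hay⟩ (fun e => hry (e ▸ hca)) hra
    · exact hab.1 hba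
  · exact h.not_lt_of_lt hb hxb (lt_of_le_of_ne hby fun e => h.color_ne (e ▸ hcb).symm)

end IsExtremalCrossPair

theorem crossFree_of_forall_diff_singleton (hchain : ∀ j, IsChain (· ≤ ·) (ch ⁻¹' {j}))
    (hdd : DaykinDaykin ch) (hκ : 3 ≤ ENat.card κ) (hC : C.Finite) (hconn : IncompConnected C)
    (hsurj : SurjOn ch C univ)
    (ih : ∀ u ∈ C, IncompConnected (C \ {u}) → SurjOn ch (C \ {u}) univ →
      CrossFree ch (C \ {u})) :
    CrossFree ch C := by
  by_contra hcross
  obtain ⟨x, y, h⟩ := exists_isExtremalCrossPair hC hcross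
  have hanti := h.isAntichain_below hchain hconn hsurj ih
  obtain ⟨a, ha, hay, b, hb, hxb, hab⟩ := h.exists_incompRel hdd hconn
  obtain ⟨hca, hcb⟩ := h.color_eq_of_incompRel hdd ha hay hb hxb hab
  have hax : a ≠ x := fun e => hab.not_lt (e ▸ hxb)
  obtain ⟨l, hlx, hly⟩ := ENat.exists_ne_ne_of_three_le hκ (ch x) (ch y)
  obtain ⟨r, hr, rfl⟩ := hsurj (mem_univ l)
  have hxr : x < r := h.lt_of_color_ne hdd hanti ha hay hb hxb hab hr hlx hly
  have har : a < r := by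
    rcases hdd x r (Ne.symm hlx) hxr a with hxa | hra
    · exact absurd hay (h.not_lt_of_lt ha (lt_of_le_of_ne hxa hax.symm))
    · exact lt_of_le_of_ne hra fun e => hly (e ▸ hca)
  -- every neighbour of `x` lies in the antichain `C ∩ Iio y`, hence is a neighbour of `a`
  have hdom : ∀ w ∈ C, x ∥ w → w ≠ a → a ∥ w := fun w hw hxw hwa =>
    have hwy : w < y := (hdd.lt_or_lt h.lt h.color_ne w).resolve_right hxw.not_lt
    ⟨hanti ⟨ha, hay⟩ ⟨hw, hwy⟩ hwa.symm, hanti ⟨hw, hwy⟩ ⟨ha, hay⟩ hwa⟩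
  have hcross := ih x h.left_mem (hconn.diff_singleton ha hax hdom)
    (hsurj.diff_singleton hb hxb.ne' hcb)
  exact hly (hca ▸ hcross a ⟨ha, hax⟩ r ⟨hr, hxr.ne'⟩ har).symm

theorem crossFree_of_incompConnected (hchain : ∀ j, IsChain (· ≤ ·) (ch ⁻¹' {j}))
    (hdd : DaykinDaykin ch) (hκ : 3 ≤ ENat.card κ) (hC : C.Finite) (hconn : IncompConnected C)
    (hsurj : SurjOn ch C univ) : CrossFree ch C := by
  induction hn : C.ncard using Nat.strong_induction_on generalizing C with
  | _ n ih =>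
    refine crossFree_of_forall_diff_singleton hchain hdd hκ hC hconn hsurj fun u hu hconn' hsurj' =>
      ih _ (hn ▸ ncard_sdiff_singleton_lt_of_mem hu hC) hC.sdiff hconn' hsurj' rfl

end CrossFree

section Components

variable {P : Type*} [PartialOrder P] {x y : P}

/-- The level sets of `componentRank` are the components of the incomparability graph, in
increasing order; not every level is attained. -/
noncomputable def componentRank (x : P) : ℕ :=
  {z | z < x ∧ ¬ IncompReach univ z x}.ncard

theorem componentRank_eq_of_incompReach (h : IncompReach univ x y) :
    componentRank x = componentRank y := by
  have hreach : ∀ z, IncompReach univ z x ↔ IncompReach univ z y :=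
    fun z => ⟨fun hz => hz.trans h, fun hz => hz.trans h.symm⟩
  unfold componentRank
  congr 1
  ext z
  exact ⟨fun ⟨hzx, hz⟩ => ⟨h.lt_of_lt (fun h' => hz h'.symm) hzx, mt (hreach z).2 hz⟩,
    fun ⟨hzy, hz⟩ => ⟨h.symm.lt_of_lt (fun h' => hz h'.symm) hzy, mt (hreach z).1 hz⟩⟩

theorem componentRank_lt [Finite P] (hxy : x < y) (h : ¬ IncompReach univ x y) :
    componentRank x < componentRank y := by
  refine ncard_lt_ncard (LE.le.ssubset_of_mem_notMem ?_ ⟨hxy, h⟩ fun hx => lt_irrefl x hx.1)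
  rintro z ⟨hzx, hz⟩
  refine ⟨hzx.trans hxy, fun hzy => ?_⟩
  exact lt_asymm hzx (hzy.symm.lt_of_lt (fun h' => h h'.symm) hxy)

theorem componentRank_lt_card [Finite P] (x : P) : componentRank x < Nat.card P :=
  ncard_lt_card fun h => (h ▸ mem_univ x : x ∈ {z | z < x ∧ _}).1.false

theorem componentRank_eq_iff [Finite P] :
    componentRank x = componentRank y ↔ IncompReach univ x y := by
  refine ⟨fun h => ?_, componentRank_eq_of_incompReach⟩
  by_contra hxy
  rcases IncompReach.lt_or_gt_of_not hxy with hlt | hlt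
  · exact (componentRank_lt hlt hxy).ne h
  · exact (componentRank_lt hlt fun h' => hxy h'.symm).ne' h

theorem lt_of_componentRank_lt [Finite P] (h : componentRank x < componentRank y) : x < y := by
  have hxy : ¬ IncompReach univ x y := fun h' => h.ne (componentRank_eq_of_incompReach h')
  refine (IncompReach.lt_or_gt_of_not hxy).resolve_right fun hyx => ?_
  exact lt_asymm h (componentRank_lt hyx fun h' => hxy h'.symm)

theorem incompConnected_componentRank_eq [Finite P] (i : ℕ) :
    IncompConnected {x : P | componentRank x = i} := fun _ ha _ hb =>
  (componentRank_eq_iff.1 (ha.trans hb.symm)).restrict fun _ hv =>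
    (componentRank_eq_of_incompReach hv).symm.trans ha

end Components

/-- Farley's theorem (generalizing the Daykin–Daykin conjecture): if a finite
poset `P` is partitioned into disjoint chains `T 0, …, T (s-1)` with `s ≥ 3`
such that whenever `p ∈ T j`, `q ∈ T k`, `j ≠ k` and `p < q` we have
`P = ↑p ∪ ↓q`, then `P` is an ordinal sum `R 0 ⊕ ⋯ ⊕ R (n-1)` in which each
block `R i` either misses some chain `T j`, or has any two of its elements
lying in different chains incomparable. -/
theorem farley_chain_decomposition {P : Type*} [Fintype P] [PartialOrder P]
    (s : ℕ) (hs : 3 ≤ s) (T : Fin s → Set P)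
    (hchain : ∀ j, IsChain (· ≤ ·) (T j))
    (hpart : ∀ x : P, ∃! j, x ∈ T j)
    (hDD : ∀ j k, j ≠ k → ∀ p ∈ T j, ∀ q ∈ T k, p < q → ∀ r : P, p ≤ r ∨ r ≤ q) :
    ∃ (n : ℕ) (R : Fin n → Set P),
      (∀ x : P, ∃! i, x ∈ R i) ∧
      (∀ i j : Fin n, i < j → ∀ p ∈ R i, ∀ q ∈ R j, p < q) ∧
      (∀ i, (∃ j, R i ∩ T j = ∅) ∨
        ∀ j k, j ≠ k → ∀ p ∈ R i ∩ T j, ∀ q ∈ R i ∩ T k, ¬ p ≤ q ∧ ¬ q ≤ p) := by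
  choose ch hch hch_unique using hpart
  obtain rfl : T = fun j => ch ⁻¹' {j} :=
    funext fun j => ext fun x => ⟨fun hx => (hch_unique x j hx).symm, fun hx => hx ▸ hch x⟩
  have hdd : DaykinDaykin ch := fun p q hpq hlt r => hDD _ _ hpq p rfl q rfl hlt r
  have hκ : 3 ≤ ENat.card (Fin s) := by simpa using hs
  refine ⟨Nat.card P, fun i => {x | componentRank x = i},
    fun x => ⟨⟨componentRank x, componentRank_lt_card x⟩, rfl, fun i hi => Fin.ext hi.symm⟩,
    fun i j hij p hp q hq => lt_of_componentRank_lt (hp ▸ hq ▸ hij), fun i => ?_⟩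
  by_cases hmeet : ∀ j, ({x | componentRank x = (i : ℕ)} ∩ ch ⁻¹' {j}).Nonempty
  · have hcross := crossFree_of_incompConnected hchain hdd hκ (toFinite _)
      (incompConnected_componentRank_eq i) fun j _ => hmeet j
    exact Or.inr fun j k hjk p hp q hq =>
      hcross.incompRel hp.1 hq.1 fun e => hjk ((hp.2 : ch p = j) ▸ (hq.2 : ch q = k) ▸ e)
  · push Not at hmeet
    exact Or.inl hmeet
end

section
/- Let P be a finite poset partitioned into three chains T1, T2, T3 such that whenever p and q lie in different chains and p < q, we have P = ↑p ∪ ↓q. Then P is an ordinal sum R1 ⊕ ... ⊕ Rn where each Ri either is disjoint from one of the three chains, or satisfies: any two elements of Ri lying in different chains are incomparable. -/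
/-!
Colour every element by the chain containing it; the hypothesis only concerns comparable pairs of
different colours. The blocks are the connected components of the incomparability graph: if
`x < y` lie in different components, then walking away from `y` (resp. `x`) along incomparable
steps never leaves the region above `x` (resp. below `y`), so whole components are comparable and
they form an ordinal sum.

Inside a component, a shortest incomparability path between two elements of different colours uses
only those two colours: two elements at distance two on it are comparable, and if their colours
differed, the hypothesis applied to them with `r` the middle element would make `r` comparable to
one of them. Now let `x < y` have different colours in a component containing a third colour at `z`.
Such a path from `x` to `z` avoids the colour of `y`, and the hypothesis pushes each of its steps
below `y`, so `z < y`; symmetrically, a path from `y` to `z` gives `x < z`. Then `x < z` is a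
pair of the same kind with a smaller top, and well-founded induction excludes all such pairs.
-/

open SimpleGraph

section

variable {P : Type*} [PartialOrder P]

def incompGraph (P : Type*) [PartialOrder P] : SimpleGraph P where
  Adj x y := ¬ x ≤ y ∧ ¬ y ≤ x
  symm := ⟨fun _ _ h => h.symm⟩
  loopless := ⟨fun _ h => h.1 le_rfl⟩

namespace incompGraph

@[simp]
theorem adj_iff {x y : P} : (incompGraph P).Adj x y ↔ ¬ x ≤ y ∧ ¬ y ≤ x := Iff.rfl

theorem not_adj_iff {x y : P} : ¬ (incompGraph P).Adj x y ↔ x ≤ y ∨ y ≤ x := by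
  rw [adj_iff, not_and_or, not_not, not_not]

theorem lt_of_lt_of_adj {x y z : P} (hxy : x < y) (hyz : (incompGraph P).Adj y z)
    (hxz : ¬ (incompGraph P).Reachable x z) : x < z := by
  rcases not_adj_iff.1 fun h => hxz h.reachable with h | h
  · exact h.lt_of_ne fun e => hxz (e ▸ Reachable.rfl)
  · exact absurd (h.trans hxy.le) (adj_iff.1 hyz).2

theorem lt_of_adj_of_lt {x y z : P} (hxy : x < y) (hxz : (incompGraph P).Adj x z)
    (hzy : ¬ (incompGraph P).Reachable z y) : z < y := by
  rcases not_adj_iff.1 fun h => hzy h.reachable with h | h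
  · exact h.lt_of_ne fun e => hzy (e ▸ Reachable.rfl)
  · exact absurd (hxy.le.trans h) (adj_iff.1 hxz).1

theorem lt_of_lt_of_walk {x y z : P} (p : (incompGraph P).Walk y z) (hxy : x < y)
    (hn : ¬ (incompGraph P).Reachable x y) : x < z := by
  induction p with
  | nil => exact hxy
  | cons h _ ih =>
    have hn' : ¬ (incompGraph P).Reachable _ _ := fun hr => hn (hr.trans h.reachable.symm)
    exact ih (lt_of_lt_of_adj hxy h hn') hn'

theorem lt_of_walk_of_lt {x y z : P} (p : (incompGraph P).Walk x z) (hxy : x < y)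
    (hn : ¬ (incompGraph P).Reachable x y) : z < y := by
  induction p with
  | nil => exact hxy
  | cons h _ ih =>
    have hn' : ¬ (incompGraph P).Reachable _ _ := fun hr => hn (h.reachable.trans hr)
    exact ih (lt_of_adj_of_lt hxy h hn') hn'

theorem lt_of_lt_of_not_reachable {x y x' y' : P} (hxy : x < y)
    (hn : ¬ (incompGraph P).Reachable x y) (hx : (incompGraph P).Reachable x x')
    (hy : (incompGraph P).Reachable y y') : x' < y' := by
  obtain ⟨p⟩ := hy
  obtain ⟨q⟩ := hx
  have hxy' := lt_of_lt_of_walk p hxy hn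
  exact lt_of_walk_of_lt q hxy' fun hr => hn (hr.trans p.reachable.symm)

noncomputable instance : LinearOrder (incompGraph P).ConnectedComponent where
  le C D := C = D ∨ ∀ x ∈ C, ∀ y ∈ D, x < y
  le_refl _ := Or.inl rfl
  le_trans C D E := by
    rintro (rfl | hCD) (rfl | hDE)
    · exact Or.inl rfl
    all_goals right
    · exact hDE
    · exact hCD
    · obtain ⟨y, rfl⟩ := D.exists_rep
      exact fun x hx z hz => (hCD x hx y rfl).trans (hDE y rfl z hz)
  le_antisymm C D := by
    rintro (rfl | hCD) (h | hDC)
    · rfl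
    · rfl
    · exact h.symm
    · obtain ⟨x, rfl⟩ := C.exists_rep
      obtain ⟨y, rfl⟩ := D.exists_rep
      exact absurd (hCD x rfl y rfl) (hDC y rfl x rfl).not_gt
  le_total C D := by
    induction C, D using ConnectedComponent.ind₂ with | h x y => ?_
    by_cases hxy : (incompGraph P).Reachable x y
    · exact Or.inl (Or.inl (ConnectedComponent.eq.2 hxy))
    have hne : x ≠ y := fun e => hxy (e ▸ Reachable.rfl)
    rcases not_adj_iff.1 fun h => hxy h.reachable with h | h
    · exact Or.inl <| Or.inr fun x' hx' y' hy' =>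
        lt_of_lt_of_not_reachable (h.lt_of_ne hne) hxy (ConnectedComponent.eq.1 hx'.symm)
          (ConnectedComponent.eq.1 hy'.symm)
    · exact Or.inr <| Or.inr fun y' hy' x' hx' =>
        lt_of_lt_of_not_reachable (h.lt_of_ne hne.symm) (fun r => hxy r.symm)
          (ConnectedComponent.eq.1 hy'.symm) (ConnectedComponent.eq.1 hx'.symm)
  toDecidableLE := Classical.decRel _

theorem lt_of_connectedComponentMk_lt {x y : P}
    (h : (incompGraph P).connectedComponentMk x < (incompGraph P).connectedComponentMk y) :
    x < y :=
  (h.le.resolve_left h.ne) x rfl y rfl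

end incompGraph

theorem SimpleGraph.Walk.getVert_ne_and_not_adj_getVert_add_two {V : Type*} {G : SimpleGraph V}
    {u v : V} (p : G.Walk u v) (hp : p.length = G.dist u v) {i : ℕ} (hi : i + 2 ≤ p.length) :
    p.getVert i ≠ p.getVert (i + 2) ∧ ¬ G.Adj (p.getVert i) (p.getVert (i + 2)) := by
  have hlong : ∀ q : G.Walk (p.getVert i) (p.getVert (i + 2)), 2 ≤ q.length := by
    intro q
    have := G.dist_le ((p.take i).append (q.append (p.drop (i + 2))))
    simp only [Walk.length_append, Walk.take_length, Walk.drop_length] at this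
    omega
  exact ⟨fun h => by simpa using hlong (Walk.nil.copy rfl h),
    fun h => by simpa using hlong h.toWalk⟩

variable {ι : Type*}

def IsDaykinColoring (c : P → ι) : Prop :=
  ∀ ⦃p q : P⦄, c p ≠ c q → p < q → ∀ r, p ≤ r ∨ r ≤ q

namespace IsDaykinColoring

open incompGraph

variable {c : P → ι}

theorem color_eq_of_adj_of_adj (hc : IsDaykinColoring c) {x y m : P}
    (hxm : (incompGraph P).Adj x m) (hmy : (incompGraph P).Adj m y) (hxy : x ≠ y)
    (hn : ¬ (incompGraph P).Adj x y) : c x = c y := by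
  by_contra hne
  rw [adj_iff] at hxm hmy
  rcases not_adj_iff.1 hn with h | h
  · rcases hc hne (h.lt_of_ne hxy) m with h' | h'
    · exact hxm.1 h'
    · exact hmy.1 h'
  · rcases hc (Ne.symm hne) (h.lt_of_ne hxy.symm) m with h' | h'
    · exact hmy.2 h'
    · exact hxm.2 h'

theorem color_getVert_add_two (hc : IsDaykinColoring c) {u v : P}
    (p : (incompGraph P).Walk u v) (hp : p.length = (incompGraph P).dist u v) {i : ℕ}
    (hi : i + 2 ≤ p.length) : c (p.getVert (i + 2)) = c (p.getVert i) :=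
  have h := p.getVert_ne_and_not_adj_getVert_add_two hp hi
  (hc.color_eq_of_adj_of_adj (p.adj_getVert_succ (by omega)) (p.adj_getVert_succ (by omega))
    h.1 h.2).symm

theorem color_getVert_eq_mod_two (hc : IsDaykinColoring c) {u v : P}
    (p : (incompGraph P).Walk u v) (hp : p.length = (incompGraph P).dist u v) {i : ℕ}
    (hi : i ≤ p.length) : c (p.getVert i) = c (p.getVert (i % 2)) := by
  induction i using Nat.strong_induction_on with | _ i ih => ?_
  rcases lt_or_ge i 2 with h | h
  · rw [Nat.mod_eq_of_lt h]
  · obtain ⟨j, rfl⟩ := Nat.exists_eq_add_of_le' h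
    rw [hc.color_getVert_add_two p hp hi, ih j (by omega) (by omega), Nat.add_mod_right]

theorem exists_walk_two_colors (hc : IsDaykinColoring c) {u v : P}
    (huv : (incompGraph P).Reachable u v) (hne : c u ≠ c v) :
    ∃ p : (incompGraph P).Walk u v, ∀ w ∈ p.support, c w = c u ∨ c w = c v := by
  obtain ⟨p, hp⟩ := huv.exists_walk_length_eq_dist
  have hv := hc.color_getVert_eq_mod_two p hp le_rfl
  rw [p.getVert_length] at hv
  have hodd : p.length % 2 = 1 := by
    by_contra heven
    rw [Nat.mod_two_ne_one.1 heven, p.getVert_zero] at hv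
    exact hne hv.symm
  refine ⟨p, fun w hw => ?_⟩
  obtain ⟨i, rfl, hi⟩ := Walk.mem_support_iff_exists_getVert.1 hw
  rw [hc.color_getVert_eq_mod_two p hp hi, hv, hodd]
  rcases Nat.mod_two_eq_zero_or_one i with h | h <;> rw [h]
  · exact Or.inl (by rw [p.getVert_zero])
  · exact Or.inr rfl

theorem lt_of_walk_of_lt (hc : IsDaykinColoring c) {x y z : P} (p : (incompGraph P).Walk x z)
    (hxy : x < y) (hp : ∀ w ∈ p.support, c w ≠ c y) : z < y := by
  induction p with
  | nil => exact hxy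
  | cons h q ih =>
    simp only [Walk.support_cons, List.mem_cons, forall_eq_or_imp] at hp
    refine ih ?_ hp.2
    rcases hc hp.1 hxy _ with h' | h'
    · exact absurd h' ((adj_iff.1 h).1)
    · exact h'.lt_of_ne fun e => hp.2 _ q.start_mem_support (congrArg c e)

theorem lt_of_lt_of_walk (hc : IsDaykinColoring c) {x y z : P} (p : (incompGraph P).Walk y z)
    (hxy : x < y) (hp : ∀ w ∈ p.support, c w ≠ c x) : x < z := by
  induction p with
  | nil => exact hxy
  | cons h q ih =>
    simp only [Walk.support_cons, List.mem_cons, forall_eq_or_imp] at hp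
    refine ih ?_ hp.2
    rcases hc (Ne.symm hp.1) hxy _ with h' | h'
    · exact h'.lt_of_ne fun e => hp.2 _ q.start_mem_support (congrArg c e).symm
    · exact absurd h' ((adj_iff.1 h).2)

theorem not_lt_of_reachable [Finite P] (hc : IsDaykinColoring c) {x y z : P}
    (hxy : (incompGraph P).Reachable x y) (hxz : (incompGraph P).Reachable x z)
    (hcxy : c x ≠ c y) (hcxz : c x ≠ c z) (hcyz : c y ≠ c z) : ¬ x < y := by
  induction y using WellFoundedLT.induction generalizing z with | _ y ih => ?_
  intro hlt
  obtain ⟨p, hp⟩ := hc.exists_walk_two_colors hxz hcxz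
  obtain ⟨q, hq⟩ := hc.exists_walk_two_colors (hxy.symm.trans hxz) hcyz
  have hzy : z < y := hc.lt_of_walk_of_lt p hlt fun w hw => by
    rcases hp w hw with h | h <;> rw [h]
    exacts [hcxy, hcyz.symm]
  have hxz' : x < z := hc.lt_of_lt_of_walk q hlt fun w hw => by
    rcases hq w hw with h | h <;> rw [h]
    exacts [hcxy.symm, hcxz.symm]
  exact ih z hzy hxz hxy hcxz hcxy hcyz.symm hxz'

theorem not_le_of_three_colors [Finite P] (hc : IsDaykinColoring c)
    {C : (incompGraph P).ConnectedComponent} {z₁ z₂ z₃ : P} (h₁ : z₁ ∈ C) (h₂ : z₂ ∈ C)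
    (h₃ : z₃ ∈ C) (h₁₂ : c z₁ ≠ c z₂) (h₁₃ : c z₁ ≠ c z₃) (h₂₃ : c z₂ ≠ c z₃) {x y : P}
    (hx : x ∈ C) (hy : y ∈ C) (hxy : c x ≠ c y) : ¬ x ≤ y := by
  obtain ⟨z, hz, hxz, hyz⟩ : ∃ z ∈ C, c x ≠ c z ∧ c y ≠ c z := by
    by_contra! h
    have := h z₁ h₁
    have := h z₂ h₂
    have := h z₃ h₃
    by_cases c x = c z₁ <;> by_cases c x = c z₂ <;> simp_all
  intro hle
  exact hc.not_lt_of_reachable (ConnectedComponent.exact (hx.trans hy.symm))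
    (ConnectedComponent.exact (hx.trans hz.symm)) hxy hxz hyz
    (hle.lt_of_ne fun e => hxy (congrArg c e))

end IsDaykinColoring

end

theorem exists_fin_indexed_fibers {X α : Type*} [LinearOrder α] [Finite α] (f : X → α) :
    ∃ (n : ℕ) (R : Fin n → Set X), (∀ x, ∃! i, x ∈ R i) ∧
      (∀ i j, i < j → ∀ p ∈ R i, ∀ q ∈ R j, f p < f q) ∧ ∀ i, ∃ a, R i = f ⁻¹' {a} := by
  have := Fintype.ofFinite α
  let e := monoEquivOfFin α rfl
  refine ⟨_, fun i => f ⁻¹' {e i}, fun x => ⟨e.symm (f x), by simp, fun j hj => ?_⟩,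
    fun i j hij p hp q hq => ?_, fun i => ⟨e i, rfl⟩⟩
  · simp only [Set.mem_preimage, Set.mem_singleton_iff] at hj
    simp [hj]
  · rw [hp, hq]
    exact e.strictMono hij

theorem exists_color_of_pairwiseDisjoint {X : Type*} {F : Set (Set X)}
    (hdisj : F.PairwiseDisjoint id) (hcover : ∀ x, ∃ T ∈ F, x ∈ T) :
    ∃ c : X → Set X, (∀ x, c x ∈ F) ∧ ∀ x, ∀ T ∈ F, x ∈ T ↔ c x = T := by
  choose c hcF hmem using hcover
  exact ⟨c, hcF, fun x T hT =>
    ⟨fun hx => hdisj.elim_set (hcF x) hT x (hmem x) hx, fun hxT => hxT ▸ hmem x⟩⟩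

theorem daykin_daykin_general {P : Type*} [Fintype P] [PartialOrder P]
    (T₁ T₂ T₃ : Set P)
    (hcover : T₁ ∪ T₂ ∪ T₃ = Set.univ)
    (hdisj₁₂ : Disjoint T₁ T₂) (hdisj₁₃ : Disjoint T₁ T₃) (hdisj₂₃ : Disjoint T₂ T₃)
    (hDD : ∀ p q : P, (∃ T T' , T ∈ ({T₁, T₂, T₃} : Set (Set P)) ∧
        T' ∈ ({T₁, T₂, T₃} : Set (Set P)) ∧ T ≠ T' ∧ p ∈ T ∧ q ∈ T') →
      p < q → ∀ r : P, p ≤ r ∨ r ≤ q) :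
    ∃ (n : ℕ) (R : Fin n → Set P),
      (∀ x : P, ∃! i, x ∈ R i) ∧
      (∀ i j : Fin n, i < j → ∀ p ∈ R i, ∀ q ∈ R j, p < q) ∧
      (∀ i, (R i ∩ T₁ = ∅ ∨ R i ∩ T₂ = ∅ ∨ R i ∩ T₃ = ∅) ∨
        ∀ T T', T ∈ ({T₁, T₂, T₃} : Set (Set P)) → T' ∈ ({T₁, T₂, T₃} : Set (Set P)) →
          T ≠ T' → ∀ p ∈ R i ∩ T, ∀ q ∈ R i ∩ T', ¬ p ≤ q ∧ ¬ q ≤ p) := by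
  set F : Set (Set P) := {T₁, T₂, T₃}
  have hF₁ : T₁ ∈ F := by simp [F]
  have hF₂ : T₂ ∈ F := by simp [F]
  have hF₃ : T₃ ∈ F := by simp [F]
  obtain ⟨c, hcF, hc_iff⟩ := exists_color_of_pairwiseDisjoint (F := F)
    (by simp [F, Set.pairwiseDisjoint_insert, hdisj₁₂, hdisj₁₃, hdisj₂₃])
    (by simpa [F, Set.eq_univ_iff_forall, or_assoc] using hcover)
  have hc : IsDaykinColoring c := fun p q hne =>
    hDD p q ⟨c p, c q, hcF p, hcF q, hne, (hc_iff p _ (hcF p)).2 rfl, (hc_iff q _ (hcF q)).2 rfl⟩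
  obtain ⟨n, R, hpart, hord, hfib⟩ := exists_fin_indexed_fibers (incompGraph P).connectedComponentMk
  refine ⟨n, R, hpart, fun i j hij p hp q hq =>
    incompGraph.lt_of_connectedComponentMk_lt (hord i j hij p hp q hq),
    fun i => or_iff_not_imp_left.2 fun hmeets => ?_⟩
  obtain ⟨C, hC⟩ := hfib i
  simp only [hC, not_or, ← Set.nonempty_iff_ne_empty] at hmeets ⊢
  obtain ⟨⟨z₁, hz₁C, hz₁⟩, ⟨z₂, hz₂C, hz₂⟩, ⟨z₃, hz₃C, hz₃⟩⟩ := hmeets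
  rintro T T' hT hT' hTT' p ⟨hpC, hp⟩ q ⟨hqC, hq⟩
  rw [← (hc_iff p T hT).1 hp, ← (hc_iff q T' hT').1 hq] at hTT'
  have hc_ne {x y : P} {S S' : Set P} (hS : S ∈ F) (hS' : S' ∈ F) (hx : x ∈ S) (hy : y ∈ S')
      (hd : Disjoint S S') : c x ≠ c y := by
    rw [(hc_iff x S hS).1 hx, (hc_iff y S' hS').1 hy]
    exact hd.ne (Set.nonempty_of_mem hx).ne_empty
  have h₁₂ := hc_ne hF₁ hF₂ hz₁ hz₂ hdisj₁₂
  have h₁₃ := hc_ne hF₁ hF₃ hz₁ hz₃ hdisj₁₃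
  have h₂₃ := hc_ne hF₂ hF₃ hz₂ hz₃ hdisj₂₃
  exact ⟨hc.not_le_of_three_colors hz₁C hz₂C hz₃C h₁₂ h₁₃ h₂₃ hpC hqC hTT',
    hc.not_le_of_three_colors hz₁C hz₂C hz₃C h₁₂ h₁₃ h₂₃ hqC hpC (Ne.symm hTT')⟩

/-- The Daykin–Daykin conjecture: if a finite poset `P` is partitioned into
three chains `T₁, T₂, T₃` such that whenever `p` and `q` lie in different
chains and `p < q` we have `P = ↑p ∪ ↓q`, then `P` is an ordinal sum
`R 0 ⊕ ⋯ ⊕ R (n-1)` in which each block either misses one of the three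
chains, or has any two of its elements lying in different chains incomparable. -/
theorem daykin_daykin {P : Type*} [Fintype P] [PartialOrder P]
    (T₁ T₂ T₃ : Set P)
    (hchain₁ : IsChain (· ≤ ·) T₁) (hchain₂ : IsChain (· ≤ ·) T₂)
    (hchain₃ : IsChain (· ≤ ·) T₃)
    (hcover : T₁ ∪ T₂ ∪ T₃ = Set.univ)
    (hdisj₁₂ : Disjoint T₁ T₂) (hdisj₁₃ : Disjoint T₁ T₃) (hdisj₂₃ : Disjoint T₂ T₃)
    (hDD : ∀ p q : P, (∃ T T' , T ∈ ({T₁, T₂, T₃} : Set (Set P)) ∧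
        T' ∈ ({T₁, T₂, T₃} : Set (Set P)) ∧ T ≠ T' ∧ p ∈ T ∧ q ∈ T') →
      p < q → ∀ r : P, p ≤ r ∨ r ≤ q) :
    ∃ (n : ℕ) (R : Fin n → Set P),
      (∀ x : P, ∃! i, x ∈ R i) ∧
      (∀ i j : Fin n, i < j → ∀ p ∈ R i, ∀ q ∈ R j, p < q) ∧
      (∀ i, (R i ∩ T₁ = ∅ ∨ R i ∩ T₂ = ∅ ∨ R i ∩ T₃ = ∅) ∨
        ∀ T T', T ∈ ({T₁, T₂, T₃} : Set (Set P)) → T' ∈ ({T₁, T₂, T₃} : Set (Set P)) →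
          T ≠ T' → ∀ p ∈ R i ∩ T, ∀ q ∈ R i ∩ T', ¬ p ≤ q ∧ ¬ q ≤ p) :=
  daykin_daykin_general T₁ T₂ T₃ hcover hdisj₁₂ hdisj₁₃ hdisj₂₃ hDD
end

section
/- The power set of a finite set, ordered by inclusion, admits a partition into symmetric chains. -/
namespace SCD

variable {α : Type*} [DecidableEq α]

structure Chain (s : Finset α) where
  a : ℕ
  b : ℕ
  f : ℕ → Finset α
  hab : a ≤ b
  hsym : a + b = s.card
  hcard : ∀ m, a ≤ m → m ≤ b → (f m).card = m
  hmono : ∀ m, a ≤ m → m < b → f m ⊆ f (m + 1)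
  hsub : ∀ m, a ≤ m → m ≤ b → f m ⊆ s

def Chain.block {s : Finset α} (c : Chain s) : Finset (Finset α) :=
  (Finset.Icc c.a c.b).image c.f

lemma Chain.mem_block {s : Finset α} (c : Chain s) {S : Finset α} :
    S ∈ c.block ↔ ∃ m, c.a ≤ m ∧ m ≤ c.b ∧ c.f m = S := by
  simp [Chain.block, Finset.mem_image, Finset.mem_Icc, and_assoc]

omit [DecidableEq α] in
lemma Chain.mono {s : Finset α} (c : Chain s) {m m' : ℕ} (ham : c.a ≤ m) (h : m ≤ m')
    (hb : m' ≤ c.b) : c.f m ⊆ c.f m' := by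
  induction m', h using Nat.le_induction with
  | base => exact subset_rfl
  | succ n hn ih =>
      exact (ih (by omega)).trans (c.hmono n (by omega) (by omega))

lemma Chain.block_subset {s : Finset α} (c : Chain s) {S : Finset α} (h : S ∈ c.block) :
    S ⊆ s := by
  obtain ⟨m, h1, h2, rfl⟩ := c.mem_block.mp h
  exact c.hsub m h1 h2

lemma Chain.notMem_of_mem_block {s : Finset α} (c : Chain s) {S : Finset α} {x : α}
    (hx : x ∉ s) (h : S ∈ c.block) : x ∉ S := fun hxS => hx (c.block_subset h hxS)

def up {s : Finset α} (x : α) (hx : x ∉ s) (c : Chain s) : Chain (insert x s) where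
  a := c.a
  b := c.b + 1
  f := fun m => if m ≤ c.b then c.f m else insert x (c.f c.b)
  hab := le_trans c.hab (by omega)
  hsym := by rw [Finset.card_insert_of_notMem hx]; have := c.hsym; omega
  hcard := by
    intro m h1 h2
    by_cases hm : m ≤ c.b
    · simp [hm, c.hcard m h1 hm]
    · have hm' : m = c.b + 1 := by omega
      have hxb : x ∉ c.f c.b := fun h => hx (c.hsub c.b c.hab le_rfl h)
      simp [hm, Finset.card_insert_of_notMem hxb, c.hcard c.b c.hab le_rfl, hm']
  hmono := by
    intro m h1 h2
    by_cases hm : m < c.b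
    · simp only [if_pos (le_of_lt hm), if_pos (Nat.succ_le_of_lt hm)]
      exact c.hmono m h1 hm
    · have hm' : m = c.b := by omega
      subst hm'
      simp only [if_pos le_rfl, if_neg (by omega : ¬ c.b + 1 ≤ c.b)]
      exact Finset.subset_insert _ _
  hsub := by
    intro m h1 h2
    by_cases hm : m ≤ c.b
    · simp only [if_pos hm]
      exact (c.hsub m h1 hm).trans (Finset.subset_insert _ _)
    · simp only [if_neg hm]
      exact Finset.insert_subset_insert _ (c.hsub c.b c.hab le_rfl)

def side {s : Finset α} (x : α) (hx : x ∉ s) (c : Chain s) (h : c.a < c.b) :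
    Chain (insert x s) where
  a := c.a + 1
  b := c.b
  f := fun m => insert x (c.f (m - 1))
  hab := h
  hsym := by rw [Finset.card_insert_of_notMem hx]; have := c.hsym; omega
  hcard := by
    intro m h1 h2
    have hm1 : c.a ≤ m - 1 := by omega
    have hm2 : m - 1 ≤ c.b := by omega
    have hxm : x ∉ c.f (m - 1) := fun hh => hx (c.hsub _ hm1 hm2 hh)
    rw [Finset.card_insert_of_notMem hxm, c.hcard _ hm1 hm2]
    omega
  hmono := by
    intro m h1 h2
    have : m - 1 + 1 = m + 1 - 1 := by omega
    apply Finset.insert_subset_insert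
    have := c.hmono (m - 1) (by omega) (by omega)
    rwa [show m - 1 + 1 = m + 1 - 1 from by omega] at this
  hsub := by
    intro m h1 h2
    exact Finset.insert_subset_insert _ (c.hsub _ (by omega) (by omega))

@[simp] lemma up_a {s : Finset α} {x : α} {hx : x ∉ s} {c : Chain s} : (up x hx c).a = c.a := rfl
@[simp] lemma up_b {s : Finset α} {x : α} {hx : x ∉ s} {c : Chain s} : (up x hx c).b = c.b + 1 := rfl
@[simp] lemma up_f {s : Finset α} {x : α} {hx : x ∉ s} {c : Chain s} {m : ℕ} :
    (up x hx c).f m = if m ≤ c.b then c.f m else insert x (c.f c.b) := rfl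
@[simp] lemma side_a {s : Finset α} {x : α} {hx : x ∉ s} {c : Chain s} {h : c.a < c.b} :
    (side x hx c h).a = c.a + 1 := rfl
@[simp] lemma side_b {s : Finset α} {x : α} {hx : x ∉ s} {c : Chain s} {h : c.a < c.b} :
    (side x hx c h).b = c.b := rfl
@[simp] lemma side_f {s : Finset α} {x : α} {hx : x ∉ s} {c : Chain s} {h : c.a < c.b} {m : ℕ} :
    (side x hx c h).f m = insert x (c.f (m - 1)) := rfl

lemma mem_up_block {s : Finset α} {x : α} {hx : x ∉ s} {c : Chain s} {S : Finset α} :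
    S ∈ (up x hx c).block ↔ S ∈ c.block ∨ S = insert x (c.f c.b) := by
  rw [Chain.mem_block, Chain.mem_block]
  simp only [up_a, up_b, up_f]
  constructor
  · rintro ⟨m, h1, h2, heq⟩
    by_cases hm : m ≤ c.b
    · left; exact ⟨m, h1, hm, by simpa [if_pos hm] using heq⟩
    · right; simp only [if_neg hm] at heq; exact heq.symm
  · rintro (⟨m, h1, h2, heq⟩ | rfl)
    · exact ⟨m, h1, by omega, by simpa [if_pos h2] using heq⟩
    · exact ⟨c.b + 1, by have := c.hab; omega, le_rfl, by simp⟩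

lemma mem_side_block {s : Finset α} {x : α} {hx : x ∉ s} {c : Chain s} {h : c.a < c.b}
    {S : Finset α} :
    S ∈ (side x hx c h).block ↔ ∃ m, c.a ≤ m ∧ m < c.b ∧ S = insert x (c.f m) := by
  rw [Chain.mem_block]
  simp only [side_a, side_b, side_f]
  constructor
  · rintro ⟨m, h1, h2, heq⟩
    exact ⟨m - 1, by omega, by omega, heq.symm⟩
  · rintro ⟨m, h1, h2, rfl⟩
    exact ⟨m + 1, by omega, by omega, by simp⟩

theorem key (s : Finset α) : ∃ (ι : Type) (_ : Fintype ι) (C : ι → Chain s),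
    ∀ S ⊆ s, ∃! i, S ∈ (C i).block := by
  induction s using Finset.induction_on with
  | empty =>
      refine ⟨PUnit, inferInstance,
        fun _ => ⟨0, 0, fun _ => ∅, le_rfl, by simp, by simp, by omega, by simp⟩, ?_⟩
      intro S hS
      refine ⟨PUnit.unit, ?_, fun y _ => rfl⟩
      exact (Chain.mem_block _).mpr ⟨0, le_rfl, le_rfl, (Finset.subset_empty.mp hS).symm⟩
  | @insert x s hx ih =>
      obtain ⟨ι, _, C, hC⟩ := ih
      let D : ι ⊕ {i : ι // (C i).a < (C i).b} → Chain (insert x s) :=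
        fun j => Sum.elim (fun i => up x hx (C i))
          (fun p : {i : ι // (C i).a < (C i).b} => side x hx (C p.1) p.2) j
      have hDl : ∀ i, D (Sum.inl i) = up x hx (C i) := fun _ => rfl
      have hDr : ∀ p, D (Sum.inr p) = side x hx (C p.1) p.2 := fun _ => rfl
      refine ⟨ι ⊕ {i : ι // (C i).a < (C i).b}, inferInstance, D, ?_⟩
      intro S hS
      -- existence witness
      have hexists : ∃ j, S ∈ (D j).block := by
        by_cases hxS : x ∈ S
        · have hT : S.erase x ⊆ s := by
            intro y hy
            have := hS (Finset.mem_of_mem_erase hy)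
            rcases Finset.mem_insert.mp this with h' | h'
            · exact absurd h' (Finset.ne_of_mem_erase hy)
            · exact h'
          obtain ⟨i, hi, -⟩ := hC _ hT
          obtain ⟨m, h1, h2, heq⟩ := (C i).mem_block.mp hi
          have hSm : S = insert x ((C i).f m) := by
            rw [heq, Finset.insert_erase hxS]
          rcases lt_or_eq_of_le h2 with h2' | h2'
          · exact ⟨Sum.inr ⟨i, lt_of_le_of_lt h1 h2'⟩,
              (hDr _) ▸ mem_side_block.mpr ⟨m, h1, h2', hSm⟩⟩
          · exact ⟨Sum.inl i, (hDl _) ▸ mem_up_block.mpr (Or.inr (by rw [hSm, h2']))⟩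
        · have hSs : S ⊆ s := fun y hy => by
            rcases Finset.mem_insert.mp (hS hy) with h' | h'
            · exact absurd (h' ▸ hy) hxS
            · exact h'
          obtain ⟨i, hi, -⟩ := hC _ hSs
          exact ⟨Sum.inl i, (hDl _) ▸ mem_up_block.mpr (Or.inl hi)⟩
      obtain ⟨j, hj⟩ := hexists
      refine ⟨j, hj, ?_⟩
      -- uniqueness
      have huniq : ∀ j1 j2, S ∈ (D j1).block → S ∈ (D j2).block → j1 = j2 := by
        have eraseq : ∀ {T1 T2 : Finset α}, x ∉ T1 → x ∉ T2 →
            insert x T1 = insert x T2 → T1 = T2 := by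
          intro T1 T2 n1 n2 hI
          rw [← Finset.erase_insert n1, ← Finset.erase_insert n2, hI]
        have oldu : ∀ {T : Finset α} (i1 i2 : ι), T ∈ (C i1).block → T ∈ (C i2).block →
            i1 = i2 := by
          intro T i1 i2 h1 h2
          obtain ⟨i, -, hu⟩ := hC T ((C i1).block_subset h1)
          rw [hu i1 h1, hu i2 h2]
        have notx : ∀ (i : ι) {T : Finset α}, T ∈ (C i).block → x ∉ T :=
          fun i _ h => (C i).notMem_of_mem_block hx h
        have topmem : ∀ i : ι, (C i).f (C i).b ∈ (C i).block :=
          fun i => (C i).mem_block.mpr ⟨(C i).b, (C i).hab, le_rfl, rfl⟩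
        have memAt : ∀ (i : ι) (m : ℕ), (C i).a ≤ m → m ≤ (C i).b → (C i).f m ∈ (C i).block :=
          fun i m h1 h2 => (C i).mem_block.mpr ⟨m, h1, h2, rfl⟩
        have notxf : ∀ (i : ι) (m : ℕ), (C i).a ≤ m → m ≤ (C i).b → x ∉ (C i).f m :=
          fun i m h1 h2 hh => hx ((C i).hsub m h1 h2 hh)
        rintro (i1 | p1) (i2 | p2) h1 h2
        · rw [hDl] at h1 h2
          rcases mem_up_block.mp h1 with h1' | h1' <;> rcases mem_up_block.mp h2 with h2' | h2'
          · rw [oldu i1 i2 h1' h2']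
          · exact absurd (h2' ▸ Finset.mem_insert_self x _) (notx i1 h1')
          · exact absurd (h1' ▸ Finset.mem_insert_self x _) (notx i2 h2')
          · have heq := eraseq (notxf i1 _ (C i1).hab le_rfl)
              (notxf i2 _ (C i2).hab le_rfl) (h1'.symm.trans h2')
            rw [oldu i1 i2 (topmem i1) (heq ▸ topmem i2)]
        · exfalso
          rw [hDl] at h1; rw [hDr] at h2
          obtain ⟨m, hm1, hm2, heq2⟩ := mem_side_block.mp h2
          rcases mem_up_block.mp h1 with h1' | h1'
          · exact absurd (heq2 ▸ Finset.mem_insert_self x _) (notx i1 h1')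
          · have heq := eraseq (notxf i1 _ (C i1).hab le_rfl)
              (notxf p2.1 m hm1 (le_of_lt hm2)) (h1'.symm.trans heq2)
            have hii := oldu i1 p2.1 (topmem i1) (heq ▸ memAt p2.1 m hm1 (le_of_lt hm2))
            have c1 := (C i1).hcard _ (C i1).hab le_rfl
            have c2 := (C p2.1).hcard m hm1 (le_of_lt hm2)
            rw [heq, hii] at c1
            omega
        · exfalso
          rw [hDr] at h1; rw [hDl] at h2
          obtain ⟨m, hm1, hm2, heq1⟩ := mem_side_block.mp h1
          rcases mem_up_block.mp h2 with h2' | h2'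
          · exact absurd (heq1 ▸ Finset.mem_insert_self x _) (notx i2 h2')
          · have heq := eraseq (notxf i2 _ (C i2).hab le_rfl)
              (notxf p1.1 m hm1 (le_of_lt hm2)) (h2'.symm.trans heq1)
            have hii := oldu i2 p1.1 (topmem i2) (heq ▸ memAt p1.1 m hm1 (le_of_lt hm2))
            have c1 := (C i2).hcard _ (C i2).hab le_rfl
            have c2 := (C p1.1).hcard m hm1 (le_of_lt hm2)
            rw [heq, hii] at c1
            omega
        · rw [hDr] at h1 h2
          obtain ⟨m1, hma, hmb, heq1⟩ := mem_side_block.mp h1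
          obtain ⟨m2, hna, hnb, heq2⟩ := mem_side_block.mp h2
          have heq := eraseq (notxf p1.1 m1 hma (le_of_lt hmb))
            (notxf p2.1 m2 hna (le_of_lt hnb)) (heq1.symm.trans heq2)
          have hii := oldu p1.1 p2.1 (memAt p1.1 m1 hma (le_of_lt hmb))
            (heq ▸ memAt p2.1 m2 hna (le_of_lt hnb))
          congr 1
          exact Subtype.ext hii
      exact fun y hy => huniq y j hy hj

end SCD

/-- The power set of a finite set admits a partition into symmetric chains:
each block is a chain under inclusion containing exactly one subset of each
cardinality `m` with `a ≤ m ≤ b`, where `a + b = n`. -/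
theorem powerset_symmetric_chain_decomposition (α : Type*) [Fintype α] [DecidableEq α] :
    ∃ (k : ℕ) (C : Fin k → Finset (Finset α)),
      (∀ S : Finset α, ∃! i, S ∈ C i) ∧
      ∀ i, IsChain (· ⊆ ·) ((C i : Set (Finset α))) ∧
        ∃ a b : ℕ, a ≤ b ∧ a + b = Fintype.card α ∧
          (∀ S ∈ C i, a ≤ S.card ∧ S.card ≤ b) ∧
          (∀ m : ℕ, a ≤ m → m ≤ b → ∃! S, S ∈ C i ∧ S.card = m) := by
  obtain ⟨ι, _, C, hC⟩ := SCD.key (Finset.univ : Finset α)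
  let e := Fintype.equivFin ι
  refine ⟨Fintype.card ι, fun j => (C (e.symm j)).block, ?_, ?_⟩
  · intro S
    obtain ⟨i, hi, hu⟩ := hC S (Finset.subset_univ S)
    refine ⟨e i, by simpa using hi, fun y hy => ?_⟩
    have := hu (e.symm y) hy
    rw [← this]
    simp
  · intro j
    set c := C (e.symm j) with hc
    constructor
    · intro S hS T hT hne
      obtain ⟨m, hm1, hm2, rfl⟩ := c.mem_block.mp hS
      obtain ⟨m', hn1, hn2, rfl⟩ := c.mem_block.mp hT
      rcases le_total m m' with h | h
      · exact Or.inl (c.mono hm1 h hn2)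
      · exact Or.inr (c.mono hn1 h hm2)
    · refine ⟨c.a, c.b, c.hab, by simpa [Finset.card_univ] using c.hsym, ?_, ?_⟩
      · intro S hS
        obtain ⟨m, hm1, hm2, rfl⟩ := c.mem_block.mp hS
        rw [c.hcard m hm1 hm2]
        exact ⟨hm1, hm2⟩
      · intro m hm1 hm2
        refine ⟨c.f m, ⟨c.mem_block.mpr ⟨m, hm1, hm2, rfl⟩, c.hcard m hm1 hm2⟩, ?_⟩
        rintro T ⟨hT, hTcard⟩
        obtain ⟨m', hn1, hn2, rfl⟩ := c.mem_block.mp hT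
        rw [c.hcard m' hn1 hn2] at hTcard
        rw [hTcard]
end

section
/- The lattice of divisors of a positive integer, ordered by divisibility, admits a partition into symmetric chains. -/
namespace SCDAux

def Om (n : ℕ) : ℕ := n.primeFactorsList.length

lemma om_mul {u v : ℕ} (hu : u ≠ 0) (hv : v ≠ 0) : Om (u * v) = Om u + Om v := by
  unfold Om
  rw [(Nat.perm_primeFactorsList_mul hu hv).length_eq, List.length_append]

lemma om_pow {p : ℕ} (hp : p.Prime) (m : ℕ) : Om (p ^ m) = m := by
  induction m with
  | zero => simp [Om]
  | succ k ih =>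
    rw [pow_succ, om_mul (pow_ne_zero _ hp.pos.ne') hp.pos.ne', ih]
    simp [Om, Nat.primeFactorsList_prime hp]

lemma chain_dvd {a b : ℕ} {f : ℕ → ℕ} (h : ∀ m, a ≤ m → m < b → f m ∣ f (m + 1)) :
    ∀ x y, a ≤ x → x ≤ y → y ≤ b → f x ∣ f y := by
  intro x y hax hxy hyb
  induction y with
  | zero =>
    have : x = 0 := Nat.le_zero.mp hxy
    simp [this]
  | succ n ih =>
    rcases Nat.lt_or_ge x (n + 1) with hlt | hge
    · have hxn : x ≤ n := Nat.lt_succ_iff.mp hlt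
      have han : a ≤ n := le_trans hax hxn
      exact dvd_trans (ih hxn (le_trans (Nat.le_succ n) hyb))
        (h n han (Nat.lt_of_lt_of_le (Nat.lt_succ_self n) hyb))
    · have : x = n + 1 := le_antisymm hxy hge
      simp [this]

lemma factor_unique {A B u v u' v' : ℕ} (hA : A ≠ 0) (hAB : Nat.Coprime A B)
    (hu : u ∣ A) (hv : v ∣ B) (hu' : u' ∣ A) (hv' : v' ∣ B) (h : u * v = u' * v') :
    u = u' ∧ v = v' := by
  have c1 : Nat.Coprime u v' := (hAB.coprime_dvd_left hu).coprime_dvd_right hv'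
  have c2 : Nat.Coprime u' v := (hAB.coprime_dvd_left hu').coprime_dvd_right hv
  have h1 : u ∣ u' := c1.dvd_of_dvd_mul_right ⟨v, h.symm⟩
  have h2 : u' ∣ u := c2.dvd_of_dvd_mul_right ⟨v', h⟩
  have hu0 : u ≠ 0 := fun h0 => hA (Nat.eq_zero_of_zero_dvd (h0 ▸ hu))
  have huu : u = u' := Nat.dvd_antisymm h1 h2
  refine ⟨huu, ?_⟩
  subst huu
  exact Nat.eq_of_mul_eq_mul_left (Nat.pos_of_ne_zero hu0) h


def SCD (N : ℕ) : Prop :=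
  ∃ (ι : Type) (_ : Fintype ι) (a b : ι → ℕ) (f : ι → ℕ → ℕ),
    (∀ i, a i ≤ b i ∧ a i + b i = Om N ∧
      (∀ m, a i ≤ m → m ≤ b i → f i m ∣ N ∧ Om (f i m) = m) ∧
      (∀ m, a i ≤ m → m < b i → f i m ∣ f i (m + 1))) ∧
    (∀ d, d ∣ N → ∃! p : ι × ℕ, a p.1 ≤ p.2 ∧ p.2 ≤ b p.1 ∧ f p.1 p.2 = d)


lemma scd_one : SCD 1 := by
  refine ⟨Unit, inferInstance, fun _ => 0, fun _ => 0, fun _ _ => 1, ?_, ?_⟩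
  · intro i
    refine ⟨le_refl _, by simp [Om], ?_, ?_⟩
    · intro m h1 h2
      have : m = 0 := le_antisymm h2 h1
      simp [this, Om]
    · intro m h1 h2; omega
  · intro d hd
    have hd1 : d = 1 := Nat.eq_one_of_dvd_one hd
    subst hd1
    refine ⟨((), 0), ⟨le_refl _, le_refl _, rfl⟩, ?_⟩
    rintro ⟨u, m⟩ ⟨h1, h2, -⟩
    have : m = 0 := le_antisymm h2 h1
    simp [this]

lemma scd_prime_pow {p : ℕ} (hp : p.Prime) (n : ℕ) : SCD (p ^ n) := by
  refine ⟨Unit, inferInstance, fun _ => 0, fun _ => n, fun _ m => p ^ m, ?_, ?_⟩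
  · intro i
    refine ⟨Nat.zero_le _, by simp [om_pow hp], ?_, ?_⟩
    · intro m _ h2
      exact ⟨pow_dvd_pow p h2, om_pow hp m⟩
    · intro m _ _
      exact pow_dvd_pow p (Nat.le_succ m)
  · intro d hd
    obtain ⟨m, hm, rfl⟩ := (Nat.dvd_prime_pow hp).mp hd
    refine ⟨((), m), ⟨Nat.zero_le _, hm, rfl⟩, ?_⟩
    rintro ⟨u, m'⟩ ⟨-, hm', he⟩
    have : m' = m := Nat.pow_right_injective hp.two_le he
    simp [this]


lemma scd_mul {A B : ℕ} (hA : 0 < A) (hB : 0 < B) (hAB : Nat.Coprime A B)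
    (h1 : SCD A) (h2 : SCD B) : SCD (A * B) := by
  classical
  obtain ⟨ι, _I1, a, b, f, hch, hun⟩ := h1
  obtain ⟨κ, _I2, c, e, g, hch', hun'⟩ := h2
  have hOm : Om (A * B) = Om A + Om B := om_mul hA.ne' hB.ne'
  have hf0 : ∀ {u : ℕ}, u ∣ A → u ≠ 0 := fun hu h0 =>
    hA.ne' (Nat.eq_zero_of_zero_dvd (h0 ▸ hu))
  have hg0 : ∀ {v : ℕ}, v ∣ B → v ≠ 0 := fun hv h0 =>
    hB.ne' (Nat.eq_zero_of_zero_dvd (h0 ▸ hv))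
  let T : Type := {q : ι × κ × ℕ // q.2.2 ≤ min (b q.1 - a q.1) (e q.2.1 - c q.2.1)}
  haveI : Fintype T := by
    apply Fintype.ofInjective (β := ι × κ × Fin (Om A + 1))
      (fun q => (q.1.1, q.1.2.1, ⟨q.1.2.2, by
        have h := q.2
        have hb := (hch q.1.1).1
        have hab := (hch q.1.1).2.1
        omega⟩))
    rintro ⟨⟨i, j, t⟩, ht⟩ ⟨⟨i', j', t'⟩, ht'⟩ h
    simp only [Prod.mk.injEq, Fin.mk.injEq] at h
    apply Subtype.ext
    simp only [Prod.mk.injEq]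
    exact ⟨h.1, h.2.1, h.2.2⟩
  refine ⟨T, inferInstance,
    fun q => a q.1.1 + c q.1.2.1 + q.1.2.2,
    fun q => b q.1.1 + e q.1.2.1 - q.1.2.2,
    fun q s =>
      if s ≤ a q.1.1 + e q.1.2.1 then
        f q.1.1 (a q.1.1 + q.1.2.2) * g q.1.2.1 (s - a q.1.1 - q.1.2.2)
      else
        f q.1.1 (s - e q.1.2.1 + q.1.2.2) * g q.1.2.1 (e q.1.2.1 - q.1.2.2),
    ?_, ?_⟩
  · rintro ⟨⟨i, j, t⟩, ht⟩
    obtain ⟨hab, hOmA, hfA, hfs⟩ := hch i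
    obtain ⟨hce, hOmB, hgB, hgs⟩ := hch' j
    have ht1 : t ≤ b i - a i := le_trans ht (min_le_left _ _)
    have ht2 : t ≤ e j - c j := le_trans ht (min_le_right _ _)
    dsimp only
    refine ⟨by omega, by rw [hOm, ← hOmA, ← hOmB]; omega, ?_, ?_⟩
    · intro s hs1 hs2
      by_cases hcase : s ≤ a i + e j
      · rw [if_pos hcase]
        obtain ⟨hu, hOu⟩ := hfA (a i + t) (by omega) (by omega)
        obtain ⟨hv, hOv⟩ := hgB (s - a i - t) (by omega) (by omega)
        refine ⟨mul_dvd_mul hu hv, ?_⟩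
        rw [om_mul (hf0 hu) (hg0 hv), hOu, hOv]; omega
      · rw [if_neg hcase]
        obtain ⟨hu, hOu⟩ := hfA (s - e j + t) (by omega) (by omega)
        obtain ⟨hv, hOv⟩ := hgB (e j - t) (by omega) (by omega)
        refine ⟨mul_dvd_mul hu hv, ?_⟩
        rw [om_mul (hf0 hu) (hg0 hv), hOu, hOv]; omega
    · intro s hs1 hs2
      by_cases hc1 : s + 1 ≤ a i + e j
      · rw [if_pos (by omega : s ≤ a i + e j), if_pos hc1]
        have hrw : s + 1 - a i - t = (s - a i - t) + 1 := by omega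
        rw [hrw]
        exact mul_dvd_mul_left _ (hgs _ (by omega) (by omega))
      · by_cases hc2 : s ≤ a i + e j
        · rw [if_pos hc2, if_neg (by omega)]
          have e1 : s - a i - t = e j - t := by omega
          have e2 : s + 1 - e j + t = (a i + t) + 1 := by omega
          rw [e1, e2]
          exact mul_dvd_mul_right (hfs _ (by omega) (by omega)) _
        · rw [if_neg hc2, if_neg (by omega)]
          have hrw : s + 1 - e j + t = (s - e j + t) + 1 := by omega
          rw [hrw]
          exact mul_dvd_mul_right (hfs _ (by omega) (by omega)) _
  · intro d hd
    obtain ⟨u, v, hu, hv, huv⟩ := Nat.dvd_mul.mp hd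
    obtain ⟨⟨i0, x⟩, ⟨hx1, hx2, hfx⟩, hupair⟩ := hun u hu
    obtain ⟨⟨j0, y⟩, ⟨hy1, hy2, hgy⟩, hvpair⟩ := hun' v hv
    obtain ⟨hab0, hOmA0, hfA0, -⟩ := hch i0
    obtain ⟨hce0, hOmB0, hgB0, -⟩ := hch' j0
    replace hx1 : a i0 ≤ x := hx1
    replace hx2 : x ≤ b i0 := hx2
    replace hy1 : c j0 ≤ y := hy1
    replace hy2 : y ≤ e j0 := hy2
    refine ⟨(⟨(i0, j0, min (x - a i0) (e j0 - y)),
        show min (x - a i0) (e j0 - y) ≤ min (b i0 - a i0) (e j0 - c j0) by omega⟩, x + y),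
      ⟨show a i0 + c j0 + min (x - a i0) (e j0 - y) ≤ x + y by omega,
       show x + y ≤ b i0 + e j0 - min (x - a i0) (e j0 - y) by omega, ?_⟩, ?_⟩
    · show (if x + y ≤ a i0 + e j0 then
          f i0 (a i0 + min (x - a i0) (e j0 - y)) *
            g j0 (x + y - a i0 - min (x - a i0) (e j0 - y))
        else
          f i0 (x + y - e j0 + min (x - a i0) (e j0 - y)) *
            g j0 (e j0 - min (x - a i0) (e j0 - y))) = d
      by_cases hcase : x + y ≤ a i0 + e j0
      · rw [if_pos hcase]
        have e1 : a i0 + min (x - a i0) (e j0 - y) = x := by omega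
        have e2 : x + y - a i0 - min (x - a i0) (e j0 - y) = y := by omega
        rw [e1, e2, hfx, hgy, huv]
      · rw [if_neg hcase]
        have e1 : x + y - e j0 + min (x - a i0) (e j0 - y) = x := by omega
        have e2 : e j0 - min (x - a i0) (e j0 - y) = y := by omega
        rw [e1, e2, hfx, hgy, huv]
    · rintro ⟨⟨⟨i, j, t⟩, ht⟩, s⟩ ⟨hs1, hs2, hFs⟩
      obtain ⟨hab, hOmA, hfA, -⟩ := hch i
      obtain ⟨hce, hOmB, hgB, -⟩ := hch' j
      replace hs1 : a i + c j + t ≤ s := hs1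
      replace hs2 : s ≤ b i + e j - t := hs2
      replace hFs : (if s ≤ a i + e j then f i (a i + t) * g j (s - a i - t)
          else f i (s - e j + t) * g j (e j - t)) = d := hFs
      have ht1 : t ≤ b i - a i := le_trans ht (min_le_left _ _)
      have ht2 : t ≤ e j - c j := le_trans ht (min_le_right _ _)
      have key : ∃ X Y, a i ≤ X ∧ X ≤ b i ∧ c j ≤ Y ∧ Y ≤ e j ∧ X + Y = s ∧
          f i X * g j Y = d ∧ t = min (X - a i) (e j - Y) := by
        by_cases hcase : s ≤ a i + e j
        · rw [if_pos hcase] at hFs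
          exact ⟨a i + t, s - a i - t, by omega, by omega, by omega, by omega,
            by omega, hFs, by omega⟩
        · rw [if_neg hcase] at hFs
          exact ⟨s - e j + t, e j - t, by omega, by omega, by omega, by omega,
            by omega, hFs, by omega⟩
      obtain ⟨X, Y, hX1, hX2, hY1, hY2, hXY, hval, htmin⟩ := key
      obtain ⟨hfXA, -⟩ := hfA X hX1 hX2
      obtain ⟨hgYB, -⟩ := hgB Y hY1 hY2
      obtain ⟨heu, hev⟩ := factor_unique hA.ne' hAB hfXA hgYB hu hv (hval.trans huv.symm)
      have hp1 := hupair (i, X) ⟨hX1, hX2, heu⟩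
      have hp2 := hvpair (j, Y) ⟨hY1, hY2, hev⟩
      simp only [Prod.mk.injEq] at hp1 hp2
      obtain ⟨hi, hX⟩ := hp1
      obtain ⟨hj, hY⟩ := hp2
      subst hi; subst hj; subst hX; subst hY; subst hXY
      exact Prod.ext (Subtype.ext (show ((i, j, t) : ι × κ × ℕ) =
        (i, j, min (X - a i) (e j - Y)) by rw [htmin])) rfl


lemma scd_of_pos {N : ℕ} (hN : 0 < N) : SCD N := by
  revert hN
  refine Nat.recOnPosPrimePosCoprime
    (fun p n hp hn _ => scd_prime_pow hp n)
    (fun h => absurd h (lt_irrefl 0))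
    (fun _ => scd_one)
    (fun x y hx hy hxy ihx ihy _ =>
      scd_mul (by omega) (by omega) hxy (ihx (by omega)) (ihy (by omega))) N

end SCDAux

/-- The lattice of divisors of a positive integer `N`, ordered by divisibility,
admits a partition into symmetric chains: each block is a chain under
divisibility containing exactly one divisor `d` with `Ω d = m` for each
`a ≤ m ≤ b`, where `a + b = Ω N` and `Ω` counts prime factors with
multiplicity. -/
theorem divisors_symmetric_chain_decomposition (N : ℕ) (hN : 0 < N) :
    ∃ (k : ℕ) (C : Fin k → Finset ℕ),
      (∀ i, C i ⊆ N.divisors) ∧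
      (∀ d ∈ N.divisors, ∃! i, d ∈ C i) ∧
      ∀ i, IsChain (· ∣ ·) ((C i : Set ℕ)) ∧
        ∃ a b : ℕ, a ≤ b ∧ a + b = (N.primeFactorsList).length ∧
          (∀ d ∈ C i, a ≤ (d.primeFactorsList).length ∧ (d.primeFactorsList).length ≤ b) ∧
          (∀ m : ℕ, a ≤ m → m ≤ b → ∃! d, d ∈ C i ∧ (d.primeFactorsList).length = m) := by
  obtain ⟨ι, I, a, b, f, hch, hun⟩ := SCDAux.scd_of_pos hN
  open SCDAux in
  set E := Fintype.equivFin ι with hE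
  refine ⟨Fintype.card ι,
    fun i => (Finset.Icc (a (E.symm i)) (b (E.symm i))).image (f (E.symm i)), ?_, ?_, ?_⟩
  · intro i x hx
    obtain ⟨m, hm, rfl⟩ := Finset.mem_image.mp hx
    rw [Finset.mem_Icc] at hm
    exact Nat.mem_divisors.mpr ⟨((hch _).2.2.1 m hm.1 hm.2).1, hN.ne'⟩
  · intro d hd
    have hdN : d ∣ N := (Nat.mem_divisors.mp hd).1
    obtain ⟨⟨i0, m0⟩, ⟨h1, h2, h3⟩, hup⟩ := hun d hdN
    replace h1 : a i0 ≤ m0 := h1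
    replace h2 : m0 ≤ b i0 := h2
    replace h3 : f i0 m0 = d := h3
    refine ⟨E i0, ?_, ?_⟩
    · dsimp only
      rw [Finset.mem_image]
      exact ⟨m0, by rw [Equiv.symm_apply_apply, Finset.mem_Icc]; exact ⟨h1, h2⟩,
        by rw [Equiv.symm_apply_apply]; exact h3⟩
    · intro i' hi'
      obtain ⟨m, hm, hfm⟩ := Finset.mem_image.mp hi'
      rw [Finset.mem_Icc] at hm
      have := hup (E.symm i', m) ⟨hm.1, hm.2, hfm⟩
      simp only [Prod.mk.injEq] at this
      rw [← this.1, Equiv.apply_symm_apply]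
  · intro i
    constructor
    · rintro x hx y hy -
      obtain ⟨m, hm, rfl⟩ := Finset.mem_image.mp hx
      obtain ⟨m', hm', rfl⟩ := Finset.mem_image.mp hy
      rw [Finset.mem_Icc] at hm hm'
      have hstep := (hch (E.symm i)).2.2.2
      rcases le_total m m' with h | h
      · exact Or.inl (chain_dvd hstep m m' hm.1 h hm'.2)
      · exact Or.inr (chain_dvd hstep m' m hm'.1 h hm.2)
    · refine ⟨a (E.symm i), b (E.symm i), (hch _).1, (hch _).2.1, ?_, ?_⟩
      · intro d hd
        obtain ⟨m, hm, rfl⟩ := Finset.mem_image.mp hd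
        rw [Finset.mem_Icc] at hm
        have := ((hch _).2.2.1 m hm.1 hm.2).2
        rw [show (f (E.symm i) m).primeFactorsList.length = Om (f (E.symm i) m) from rfl, this]
        exact hm
      · intro m hm1 hm2
        refine ⟨f (E.symm i) m, ⟨Finset.mem_image.mpr ⟨m, Finset.mem_Icc.mpr ⟨hm1, hm2⟩, rfl⟩,
          ((hch _).2.2.1 m hm1 hm2).2⟩, ?_⟩
        rintro d ⟨hd, hOd⟩
        obtain ⟨m', hm', rfl⟩ := Finset.mem_image.mp hd
        rw [Finset.mem_Icc] at hm'
        have : Om (f (E.symm i) m') = m' := ((hch _).2.2.1 m' hm'.1 hm'.2).2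
        rw [show (f (E.symm i) m').primeFactorsList.length = Om (f (E.symm i) m') from rfl,
          this] at hOd
        rw [hOd]
end

section
/- Dilworth's theorem fails for infinite posets: there exists a poset of infinite width in which every antichain is finite, hence which cannot be partitioned into finitely many chains, even though the supremum argument would suggest otherwise; concretely, there is a poset with all antichains finite which admits no partition into κ chains for any finite κ. -/
/-! In `ℕ × ℕ` with the product order, every antichain is finite by Dickson's lemma (the order is a
well-quasi-order), while the antidiagonal `{(i, j) | i + j = n}` is an antichain with `n + 1`
elements. A family of chains covers each antichain injectively, since a chain meets an antichain in
at most one point, so no finite family of chains covers `ℕ × ℕ`. -/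

open Finset

theorem Finset.isAntichain_antidiagonal {A : Type*} [AddMonoid A] [PartialOrder A]
    [AddLeftStrictMono A] [AddRightStrictMono A] [HasAntidiagonal A] (n : A) :
    IsAntichain (· ≤ ·) (antidiagonal n : Set (A × A)) := by
  rintro ⟨a, b⟩ hab ⟨c, d⟩ hcd hne ⟨hac, hbd⟩
  rw [mem_coe, HasAntidiagonal.mem_antidiagonal] at hab hcd
  obtain ⟨rfl, rfl⟩ := (add_eq_add_iff_eq_and_eq hac hbd).1 (hab.trans hcd.symm)
  exact hne rfl

theorem IsAntichain.card_le_of_forall_mem_chain {α ι : Type*} [Fintype ι] {r : α → α → Prop}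
    {s : Finset α} (hs : IsAntichain r (s : Set α)) {C : ι → Set α} (hC : ∀ i, IsChain r (C i))
    (hcover : ∀ x ∈ s, ∃ i, x ∈ C i) : #s ≤ Fintype.card ι := by
  choose f hf using hcover
  rw [← Fintype.card_coe]
  refine Fintype.card_le_of_injective (fun x : s ↦ f x x.2) fun x y (hxy : f x x.2 = f y y.2) ↦
    Subtype.ext ?_
  by_contra hne
  have hy : (y : α) ∈ C (f x x.2) := hxy ▸ hf y y.2
  exact (hC _ (hf x x.2) hy hne).elim (hs x.2 y.2 hne) (hs y.2 x.2 (Ne.symm hne))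

/-- Perles: Dilworth's theorem fails for infinite posets. There is a poset of
infinite width in which every antichain is finite, yet which cannot be
partitioned (indeed, not even covered) by finitely many chains. -/
theorem perles_dilworth_fails_infinite :
    ∃ (P : Type) (inst : PartialOrder P),
      (∀ A : Set P, IsAntichain inst.le A → A.Finite) ∧
      (∀ n : ℕ, ∃ A : Finset P, IsAntichain inst.le (A : Set P) ∧ n ≤ A.card) ∧
      ∀ (κ : ℕ) (C : Fin κ → Set P), (∀ i, IsChain inst.le (C i)) →
        ¬ ∀ x : P, ∃ i, x ∈ C i := by
  refine ⟨ℕ × ℕ, inferInstance, fun A ↦ WellQuasiOrderedLE.finite_of_isAntichain, fun n ↦ ?_,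
    fun κ C hC hcover ↦ ?_⟩
  · exact ⟨antidiagonal n, isAntichain_antidiagonal n, by simp⟩
  · have hcard := (isAntichain_antidiagonal κ).card_le_of_forall_mem_chain hC fun x _ ↦ hcover x
    simp at hcard
end

section
/- Let P' be a finite poset satisfying P'(R'_1,...,R'_m; T'_1, T_2,...,T_s) with s ≥ 3, and let P = P' ∪ {x} be a poset with a new element x of maximal height such that x has at least as many lower covers as any other element of maximal height, T_1 := T'_1 ∪ {x} is a chain, and for all p ∈ T_j, q ∈ T_k with j ≠ k, p < q implies P = ↑p ∪ ↓q. Then P satisfies P(R_1,...,R_n; T_1,...,T_s) for some subsets R_1,...,R_n. -/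
/-- `DDCondOn P R T`: the predicate `P(R₁,…,Rₙ; T₁,…,Tₛ)`. The subposet `P` is
the ordinal sum of the blocks `R i`; the `T j` are disjoint chains covering
`P`; and each block `R i` either misses some chain `T j`, or has any two of
its elements lying in different chains incomparable. -/
def DDCondOn {α : Type*} [PartialOrder α] (P : Set α) {n s : ℕ}
    (R : Fin n → Set α) (T : Fin s → Set α) : Prop :=
  (∀ i, R i ⊆ P) ∧ (∀ x ∈ P, ∃! i, x ∈ R i) ∧
  (∀ i j : Fin n, i < j → ∀ p ∈ R i, ∀ q ∈ R j, p < q) ∧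
  (∀ j, T j ⊆ P) ∧ (∀ j, IsChain (· ≤ ·) (T j)) ∧
  (∀ j k, j ≠ k → Disjoint (T j) (T k)) ∧ (∀ x ∈ P, ∃ j, x ∈ T j) ∧
  (∀ i, (∃ j, R i ∩ T j = ∅) ∨
    ∀ j k, j ≠ k → ∀ p ∈ R i ∩ T j, ∀ q ∈ R i ∩ T k, ¬ p ≤ q ∧ ¬ q ≤ p)

/-- The height of `x` within the subset `S`: the supremum of lengths of chains
in `S` with greatest element `x`. -/
noncomputable def heightIn {α : Type*} [PartialOrder α] (S : Set α) (x : α) : ℕ :=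
  sSup {n | ∃ C : Finset α, (C : Set α) ⊆ S ∧ IsChain (· ≤ ·) (C : Set α) ∧
    x ∈ C ∧ (∀ y ∈ C, y ≤ x) ∧ C.card - 1 = n}

set_option linter.unusedSectionVars false

namespace Farley

variable {α : Type*} [PartialOrder α]

variable {α : Type*} [PartialOrder α]

/-- Two elements are incomparable. -/
def Incomp (a b : α) : Prop := ¬ a ≤ b ∧ ¬ b ≤ a

/-- Connectivity in the incomparability graph. -/
def Conn (a b : α) : Prop := Relation.ReflTransGen Incomp a b

lemma incomp_symm {a b : α} (h : Incomp a b) : Incomp b a := ⟨h.2, h.1⟩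

lemma conn_refl (a : α) : Conn a a := Relation.ReflTransGen.refl

lemma conn_trans {a b c : α} (h1 : Conn a b) (h2 : Conn b c) : Conn a c := h1.trans h2

lemma conn_symm {a b : α} (h : Conn a b) : Conn b a := by
  induction h with
  | refl => exact Relation.ReflTransGen.refl
  | tail _ h2 ih => exact Relation.ReflTransGen.head (incomp_symm h2) ih

lemma comp_of_not_conn {a b : α} (h : ¬ Conn a b) : a ≤ b ∨ b ≤ a := by
  by_contra hc
  push_neg at hc
  exact h (Relation.ReflTransGen.single ⟨hc.1, hc.2⟩)

lemma push_right {z a b : α} (hza : z < a) (hn : ¬ Conn z a) (h : Conn a b) :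
    z < b ∧ ¬ Conn z b := by
  induction h with
  | refl => exact ⟨hza, hn⟩
  | @tail p q _ hpq ih =>
    obtain ⟨hzp, hnzp⟩ := ih
    have hnzq : ¬ Conn z q := fun hq =>
      hnzp (hq.trans (Relation.ReflTransGen.single (incomp_symm hpq)))
    have hne : z ≠ q := fun e => hnzq (e ▸ Relation.ReflTransGen.refl)
    rcases comp_of_not_conn hnzq with h1 | h1
    · exact ⟨lt_of_le_of_ne h1 hne, hnzq⟩
    · exact absurd (le_of_lt (lt_of_le_of_lt h1 hzp)) hpq.2

/-- Rank function: number of elements strictly below `y` and not connected to it. -/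
noncomputable def kfun (y : α) : ℕ := {z | z < y ∧ ¬ Conn z y}.ncard

lemma kfun_eq_of_conn {a b : α} (h : Conn a b) : kfun a = kfun b := by
  unfold kfun
  congr 1
  ext z
  constructor
  · rintro ⟨h1, h2⟩
    exact push_right h1 h2 h
  · rintro ⟨h1, h2⟩
    exact push_right h1 h2 (conn_symm h)

variable [Fintype α]

lemma kfun_lt {a b : α} (hn : ¬ Conn a b) (hab : a < b) : kfun a < kfun b := by
  have hsub : {z | z < a ∧ ¬ Conn z a} ⊆ {z | z < b ∧ ¬ Conn z b} := by
    rintro z ⟨hza, hnza⟩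
    refine ⟨hza.trans hab, fun hzb => ?_⟩
    have := push_right hab hn (conn_symm hzb)
    exact lt_asymm hza this.1
  have hss : {z | z < a ∧ ¬ Conn z a} ⊂ {z | z < b ∧ ¬ Conn z b} := by
    refine ⟨hsub, fun h => ?_⟩
    have : a ∈ {z | z < a ∧ ¬ Conn z a} := h ⟨hab, hn⟩
    exact lt_irrefl a this.1
  exact Set.ncard_lt_ncard hss (Set.toFinite _)

lemma conn_of_kfun_eq {a b : α} (h : kfun a = kfun b) : Conn a b := by
  by_contra hn
  have hne : a ≠ b := fun e => hn (e ▸ Relation.ReflTransGen.refl)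
  rcases comp_of_not_conn hn with h1 | h1
  · exact absurd h (Nat.ne_of_lt (kfun_lt hn (lt_of_le_of_ne h1 hne)))
  · exact absurd h.symm (Nat.ne_of_lt (kfun_lt (fun hc => hn (conn_symm hc)) (lt_of_le_of_ne h1 (Ne.symm hne))))

lemma lt_of_kfun_lt {a b : α} (h : kfun a < kfun b) : a < b := by
  have hn : ¬ Conn a b := fun hc => absurd (kfun_eq_of_conn hc) (Nat.ne_of_lt h)
  have hne : a ≠ b := fun e => (Nat.ne_of_lt h) (e ▸ rfl)
  rcases comp_of_not_conn hn with h1 | h1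
  · exact lt_of_le_of_ne h1 hne
  · exact absurd (kfun_lt (fun hc => hn (conn_symm hc)) (lt_of_le_of_ne h1 (Ne.symm hne)))
      (Nat.not_lt.mpr h.le)

/-- Extract an indexed path from connectivity. -/
lemma exists_path {a b : α} (h : Conn a b) :
    ∃ (t : ℕ) (u : ℕ → α), u 0 = a ∧ u t = b ∧ ∀ j, j + 1 ≤ t → Incomp (u j) (u (j + 1)) := by
  induction h with
  | refl => exact ⟨0, fun _ => a, rfl, rfl, by omega⟩
  | @tail p q _ hpq ih =>
    obtain ⟨tt, uu, h0, ht, he⟩ := ih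
    refine ⟨tt + 1, fun j => if j ≤ tt then uu j else q, ?_, ?_, ?_⟩
    · simpa using h0
    · simp
    intro j hj
    by_cases hjt : j + 1 ≤ tt
    · simpa [show j ≤ tt by omega, hjt] using he j hjt
    · have hjeq : j = tt := by omega
      subst hjeq
      simpa [show ¬ (j + 1 ≤ j) by omega, ht] using hpq


/-- The augmented chain family. -/
def TT (x : α) (T' : Fin (s + 3) → Set α) (j : Fin (s + 3)) : Set α :=
  if j = 0 then T' 0 ∪ {x} else T' j

lemma mem_TT {x : α} {T' : Fin (s + 3) → Set α} {j : Fin (s + 3)} {y : α}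
    (h : y ∈ T' j) : y ∈ TT x T' j := by
  unfold TT
  split
  · rename_i hj; exact Set.mem_union_left _ (hj ▸ h)
  · exact h

lemma x_mem_TT0 {x : α} {T' : Fin (s + 3) → Set α} : x ∈ TT x T' 0 := by
  unfold TT
  simp

lemma tuniq {T' : Fin (s + 3) → Set α}
    (hdisj : ∀ j k, j ≠ k → Disjoint (T' j) (T' k))
    {y : α} {j k : Fin (s + 3)} (hj : y ∈ T' j) (hk : y ∈ T' k) : j = k := by
  by_contra h
  exact Set.disjoint_left.mp (hdisj j k h) hj hk

lemma T0_lt {x : α} {T' : Fin (s + 3) → Set α}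
    (hT₁ : IsChain (· ≤ ·) (T' 0 ∪ {x}))
    (hxmax : ∀ y : α, x ≤ y → y = x)
    (hsub : ∀ j, T' j ⊆ {y : α | y ≠ x})
    {y : α} (hy : y ∈ T' 0) : y < x := by
  have hne : y ≠ x := hsub 0 hy
  rcases hT₁ (Set.mem_union_left _ hy) (Set.mem_union_right _ rfl) hne with h | h
  · exact lt_of_le_of_ne h hne
  · exact absurd (hxmax y h) hne

lemma Mchain_ne0 {x : α} {T' : Fin (s + 3) → Set α}
    (hT₁ : IsChain (· ≤ ·) (T' 0 ∪ {x}))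
    (hxmax : ∀ y : α, x ≤ y → y = x)
    (hsub : ∀ j, T' j ⊆ {y : α | y ≠ x})
    {w : α} {c : Fin (s + 3)} (hwx : ¬ w ≤ x) (hwc : w ∈ T' c) : c ≠ 0 := by
  rintro rfl
  exact hwx (T0_lt hT₁ hxmax hsub hwc).le

lemma M_anti {x : α} {T' : Fin (s + 3) → Set α}
    (hdisj : ∀ j k, j ≠ k → Disjoint (T' j) (T' k))
    (hxmax : ∀ y : α, x ≤ y → y = x)
    (hDD : ∀ j k : Fin (s + 3), j ≠ k → ∀ p ∈ TT x T' j, ∀ q ∈ TT x T' k,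
      p < q → ∀ r : α, p ≤ r ∨ r ≤ q)
    {w w' : α} {a b : Fin (s + 3)} (hwx : ¬ w ≤ x) (hw'x : ¬ w' ≤ x)
    (hwa : w ∈ T' a) (hw'b : w' ∈ T' b) (hab : a ≠ b) : ¬ w ≤ w' := by
  intro hle
  have hne : w ≠ w' := by
    rintro rfl
    exact hab (tuniq hdisj hwa hw'b)
  rcases hDD a b hab w (mem_TT hwa) w' (mem_TT hw'b) (lt_of_le_of_ne hle hne) x with h | h
  · exact hwx h
  · exact hw'x ((hxmax w' h) ▸ le_refl x)

/-- The key path lemma: if an element `v` of the component of `x` lies strictly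
below `x` and on a chain `b ≠ 0`, then every element not below `x` lies on
chain `b`. (Contrapositive form.) -/
lemma master {x : α} {T' : Fin (s + 3) → Set α}
    (hsub : ∀ j, T' j ⊆ {y : α | y ≠ x})
    (hdisj : ∀ j k, j ≠ k → Disjoint (T' j) (T' k))
    (hcov : ∀ y : α, y ≠ x → ∃ j, y ∈ T' j)
    (hT₁ : IsChain (· ≤ ·) (T' 0 ∪ {x}))
    (hxmax : ∀ y : α, x ≤ y → y = x)
    (hDD : ∀ j k : Fin (s + 3), j ≠ k → ∀ p ∈ TT x T' j, ∀ q ∈ TT x T' k,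
      p < q → ∀ r : α, p ≤ r ∨ r ≤ q) :
    ∀ t : ℕ, ∀ u : ℕ → α, (∀ j, j + 1 ≤ t → Incomp (u j) (u (j + 1))) → u t = x →
      u 0 < x → ∀ b : Fin (s + 3), u 0 ∈ T' b → b ≠ 0 →
      ∀ (c : Fin (s + 3)) (w : α), ¬ w ≤ x → w ∈ T' c → c ≠ b → False := by
  intro t
  induction t using Nat.strong_induction_on with
  | _ t IH =>
    intro u hedge hlast h0x b hb hb0 c w hwx hwc hcb
    classical
    have ht0 : t ≠ 0 := by rintro rfl; rw [hlast] at h0x; exact lt_irrefl x h0x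
    have ht1 : t ≠ 1 := by
      rintro rfl
      have h := hedge 0 (le_refl 1)
      rw [hlast] at h
      exact h.1 h0x.le
    have hDD0 : ∀ r, u 0 ≤ r ∨ r ≤ x :=
      hDD b 0 hb0 (u 0) (mem_TT hb) x x_mem_TT0 h0x
    -- first vertex of the path not below x
    have hex : ∃ i, 1 ≤ i ∧ i ≤ t - 1 ∧ ¬ u i ≤ x := by
      refine ⟨t - 1, by omega, le_refl _, ?_⟩
      have h := hedge (t - 1) (by omega)
      rw [show t - 1 + 1 = t by omega, hlast] at h
      exact h.1
    obtain ⟨hi1, hit, hiM⟩ := Nat.find_spec hex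
    set i := Nat.find hex with hidef
    have hmin : ∀ j, j < i → 1 ≤ j → j ≤ t - 1 → u j ≤ x := by
      intro j hj h1 h2
      by_contra hc
      exact Nat.find_min hex hj ⟨h1, h2, hc⟩
    -- every earlier vertex is strictly below x
    have hDx : ∀ j, 1 ≤ j → j < i → u j < x := by
      intro j
      induction j using Nat.strong_induction_on with
      | _ j IHj =>
        intro hj1 hji
        have hle : u j ≤ x := hmin j hji hj1 (by omega)
        rcases lt_or_eq_of_le hle with h | h
        · exact h
        · exfalso
          have he := hedge (j - 1) (by omega)
          rw [show j - 1 + 1 = j by omega, h] at he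
          by_cases hj' : j = 1
          · rw [show j - 1 = 0 by omega] at he
            exact he.1 h0x.le
          · exact he.1 (IHj (j - 1) (by omega) (by omega) (by omega)).le
    -- chain indices of earlier vertices lie in {0, c}
    have hchain : ∀ j, 1 ≤ j → j < i → ∀ e : Fin (s + 3), u j ∈ T' e → e = 0 ∨ e = c := by
      intro j hj1 hji e he
      by_contra hcon
      push_neg at hcon
      obtain ⟨he0, hec⟩ := hcon
      refine IH (t - j) (by omega) (fun n => u (j + n)) (fun n hn => ?_) ?_ ?_ e ?_ he0 c w hwx hwc (Ne.symm hec)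
      · exact hedge (j + n) (by omega)
      · show u (j + (t - j)) = x
        rw [show j + (t - j) = t by omega]
        exact hlast
      · exact hDx j hj1 hji
      · exact he
    -- i ≥ 2
    have hi2 : 2 ≤ i := by
      by_contra hlt
      have hi1' : i = 1 := by omega
      have he0 := hedge 0 (by omega)
      rcases hDD0 (u 1) with h | h
      · exact he0.1 h
      · rw [hi1'] at hiM; exact hiM h
    -- the bridge d = u (i-1)
    have hdlt : u (i - 1) < x := hDx (i - 1) (by omega) (by omega)
    obtain ⟨e, hde⟩ := hcov (u (i - 1)) (ne_of_lt hdlt)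
    have hedgei := hedge (i - 1) (by omega)
    rw [show i - 1 + 1 = i by omega] at hedgei
    have he0 : e = 0 := by
      by_contra he0'
      rcases hDD e 0 he0' (u (i - 1)) (mem_TT hde) x x_mem_TT0 hdlt (u i) with h | h
      · exact hedgei.1 h
      · exact hiM h
    have huix : u i ≠ x := fun hh => hiM (hh ▸ le_refl x)
    obtain ⟨f, hf⟩ := hcov (u i) huix
    -- select a witness w' not below x, on a chain ≠ b, incomparable with the bridge
    have hsel : ∃ (w' : α) (g : Fin (s + 3)), ¬ w' ≤ x ∧ w' ∈ T' g ∧ g ≠ b ∧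
        Incomp (u (i - 1)) w' := by
      by_cases hfb : f = b
      · refine ⟨w, c, hwx, hwc, hcb, ?_, fun hwd => hwx (hwd.trans hdlt.le)⟩
        intro hdw
        have hdw' : u (i - 1) < w := lt_of_le_of_ne hdw (by rintro rfl; exact hwx hdlt.le)
        have hc0 : c ≠ 0 := Mchain_ne0 hT₁ hxmax hsub hwx hwc
        rcases hDD 0 c (Ne.symm hc0) (u (i - 1)) (mem_TT (he0 ▸ hde)) w (mem_TT hwc) hdw'
            (u i) with h | h
        · exact hedgei.1 h
        · exact M_anti hdisj hxmax hDD hiM hwx hf hwc (fun hfc => hcb (hfc ▸ hfb)) h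
      · exact ⟨u i, f, hiM, hf, hfb, hedgei⟩
    obtain ⟨w', g, hw'x, hw'g, hgb, hdw'⟩ := hsel
    have h0w' : u 0 < w' := by
      rcases hDD0 w' with h | h
      · exact lt_of_le_of_ne h (by rintro rfl; exact hw'x h0x.le)
      · exact absurd h hw'x
    have h0d : u 0 < u (i - 1) := by
      have h0d' : u 0 ≤ u (i - 1) := by
        rcases hDD b g (Ne.symm hgb) (u 0) (mem_TT hb) w' (mem_TT hw'g) h0w' (u (i - 1))
            with h | h
        · exact h
        · exact absurd h hdw'.1
      rcases lt_or_eq_of_le h0d' with h | h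
      · exact h
      · exact absurd (tuniq hdisj hb (h ▸ (he0 ▸ hde))) hb0
    -- descent towards the start of the path
    have desc : ∀ j, 1 ≤ j → j ≤ i - 1 → u 0 < u j → False := by
      intro j
      induction j using Nat.strong_induction_on with
      | _ j IHj =>
        intro hj1 hji h0j
        by_cases hj1' : j = 1
        · rw [hj1'] at h0j
          exact (hedge 0 (by omega)).1 h0j.le
        · obtain ⟨ej, hej⟩ := hcov (u j) (ne_of_lt (hDx j hj1 (by omega)))
          have hejb : ej ≠ b := by
            rcases hchain j hj1 (by omega) ej hej with h | h
            · rw [h]; exact Ne.symm hb0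
            · rw [h]; exact hcb
          have hejm := hedge (j - 1) (by omega)
          rw [show j - 1 + 1 = j by omega] at hejm
          rcases hDD b ej (Ne.symm hejb) (u 0) (mem_TT hb) (u j) (mem_TT hej) h0j (u (j - 1))
              with h | h
          · rcases lt_or_eq_of_le h with h' | h'
            · exact IHj (j - 1) (by omega) (by omega) (by omega) h'
            · rw [← h'] at hejm
              exact hejm.1 h0j.le
          · exact hejm.1 h
    exact desc (i - 1) (by omega) (le_refl _) h0d

theorem key_aux [Fintype α] (x : α) (m s : ℕ)
    (R' : Fin m → Set α) (T' : Fin (s + 3) → Set α)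
    (hP' : DDCondOn {y : α | y ≠ x} R' T')
    (hxmax : ∀ y : α, x ≤ y → y = x)
    (hT₁ : IsChain (· ≤ ·) (T' 0 ∪ {x}))
    (hDD : ∀ j k : Fin (s + 3), j ≠ k → ∀ p ∈ TT x T' j, ∀ q ∈ TT x T' k,
      p < q → ∀ r : α, p ≤ r ∨ r ≤ q) :
    ∃ (n : ℕ) (R : Fin n → Set α), DDCondOn Set.univ R (TT x T') := by
  classical
  obtain ⟨hR'sub, hR'part, hR'ord, hT'sub, hT'chain, hT'disj, hT'cov, hR'cond⟩ := hP'
  have hcov' : ∀ y : α, y ≠ x → ∃ j, y ∈ T' j := fun y hy => hT'cov y hy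
  have hxT' : ∀ j, x ∉ T' j := fun j h => (hT'sub j h) rfl
  have memT' : ∀ (y : α) (j : Fin (s + 3)), y ≠ x → y ∈ TT x T' j → y ∈ T' j := by
    intro y j hy hyT
    unfold TT at hyT
    split at hyT
    · rename_i hj
      rcases hyT with h | h
      · exact hj ▸ h
      · exact absurd h hy
    · exact hyT
  -- one bad chain-crossing comparability below x forces all of M into one chain
  have caseV : ∀ (v : α) (b : Fin (s + 3)), Conn x v → v < x → v ∈ T' b → b ≠ 0 →
      ∀ w : α, ¬ w ≤ x → w ∈ T' b := by
    intro v b hconn hvx hvb hb0 w hwx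
    obtain ⟨c', hwc'⟩ := hcov' w (fun h => hwx (h ▸ le_refl x))
    by_cases hc'b : c' = b
    · exact hc'b ▸ hwc'
    · exfalso
      obtain ⟨t, u, hu0, hut, hedges⟩ := exists_path (conn_symm hconn)
      refine master hT'sub hT'disj hcov' hT₁ hxmax hDD t u hedges hut ?_ b ?_ hb0 c' w hwx
        hwc' hc'b
      · rw [hu0]; exact hvx
      · rw [hu0]; exact hvb
  have fromV : ∀ (v : α) (b : Fin (s + 3)), Conn x v → v < x → v ∈ T' b → b ≠ 0 →
      ∃ c : Fin (s + 3), c ≠ 0 ∧ (∀ w, ¬ w ≤ x → w ∈ T' c) ∧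
        (∀ (v' : α) (e : Fin (s + 3)), Conn x v' → v' < x → v' ∈ T' e → e ≠ 0 → e = c) := by
    intro v b hconn hvx hvb hb0
    refine ⟨b, hb0, caseV v b hconn hvx hvb hb0, ?_⟩
    intro v' e hconn' hv'x hv'e he0
    rcases Relation.ReflTransGen.cases_head hconn with h | ⟨w₀, hxw₀, -⟩
    · exact absurd h.symm (ne_of_lt hvx)
    · have hw₀x : ¬ w₀ ≤ x := hxw₀.2
      exact tuniq hT'disj (caseV v' e hconn' hv'x hv'e he0 w₀ hw₀x)
        (caseV v b hconn hvx hvb hb0 w₀ hw₀x)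
  have badlemma : ∀ (p q : α) (jp jq : Fin (s + 3)), Conn x p → Conn x q →
      p ∈ TT x T' jp → q ∈ TT x T' jq → jp ≠ jq → p < q →
      ∃ c : Fin (s + 3), c ≠ 0 ∧ (∀ w, ¬ w ≤ x → w ∈ T' c) ∧
        (∀ (v : α) (e : Fin (s + 3)), Conn x v → v < x → v ∈ T' e → e ≠ 0 → e = c) := by
    intro p q jp jq hcp hcq hpj hqj hne hpq
    have hPQ : ∀ r : α, p ≤ r ∨ r ≤ q := hDD jp jq hne p hpj q hqj hpq
    by_cases hqex : q = x
    · have hjq0 : jq = 0 := by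
        by_contra h
        have hq' : q ∈ T' jq := by unfold TT at hqj; rwa [if_neg h] at hqj
        rw [hqex] at hq'
        exact hxT' jq hq'
      have hjp0 : jp ≠ 0 := fun hh => hne (hh.trans hjq0.symm)
      have hpx : p < x := hqex ▸ hpq
      exact fromV p jp hcp hpx (memT' p jp (ne_of_lt hpx) hpj) hjp0
    · have hpltx : p < x := by
        rcases hPQ x with h | h
        · rcases lt_or_eq_of_le h with h' | h'
          · exact h'
          · exfalso
            rw [h'] at hpq
            exact hqex (hxmax q hpq.le)
        · exact absurd (hxmax q h) hqex
      have hpT' : p ∈ T' jp := memT' p jp (ne_of_lt hpltx) hpj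
      have hqT' : q ∈ T' jq := memT' q jq hqex hqj
      by_cases hqlex : q ≤ x
      · have hqltx : q < x := lt_of_le_of_ne hqlex hqex
        by_cases hjp0 : jp = 0
        · have hjq0 : jq ≠ 0 := fun hh => hne (hjp0.trans hh.symm)
          exact fromV q jq hcq hqltx hqT' hjq0
        · exact fromV p jp hcp hpltx hpT' hjp0
      · -- q is not below x
        have hjq0 : jq ≠ 0 := Mchain_ne0 hT₁ hxmax hT'sub hqlex hqT'
        by_cases hjp0 : jp = 0
        · -- the delicate case: p in chain 0, q not below x
          have hpT0 : p ∈ T' 0 := hjp0 ▸ hpT'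
          rcases Relation.ReflTransGen.cases_tail hcp with h | ⟨u, hxu, hup⟩
          · exact absurd h (ne_of_lt hpltx)
          · have huq : u < q := by
              rcases hPQ u with h | h
              · exact absurd h hup.2
              · refine lt_of_le_of_ne h (fun hh => ?_)
                rw [hh] at hup
                exact hup.2 hpq.le
            by_cases hux : u ≤ x
            · have hune : u ≠ x := by
                rintro rfl
                exact hup.2 hpltx.le
              have hultx : u < x := lt_of_le_of_ne hux hune
              obtain ⟨e, hue⟩ := hcov' u hune
              have he0 : e ≠ 0 := by
                rintro rfl
                have hcomp := hT₁ (Set.mem_union_left _ hue) (Set.mem_union_left _ hpT0)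
                  (fun hh => hup.1 (le_of_eq hh))
                rcases hcomp with h | h
                · exact hup.1 h
                · exact hup.2 h
              exact fromV u e hxu hultx hue he0
            · -- u not below x either
              obtain ⟨k', huk'⟩ := hcov' u (fun h => hux (h ▸ le_refl x))
              have hk'jq : k' = jq := by
                by_contra h
                exact M_anti hT'disj hxmax hDD hux hqlex huk' hqT' h huq.le
              refine ⟨jq, hjq0, ?_, ?_⟩
              · intro w hwx
                obtain ⟨g, hwg⟩ := hcov' w (fun h => hwx (h ▸ le_refl x))
                by_cases hgjq : g = jq
                · exact hgjq ▸ hwg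
                · exfalso
                  have hpw : p < w := by
                    rcases hPQ w with h | h
                    · refine lt_of_le_of_ne h (fun hh => ?_)
                      rw [← hh] at hwx
                      exact hwx hpltx.le
                    · exact absurd h (M_anti hT'disj hxmax hDD hwx hqlex hwg hqT' hgjq)
                  have hg0 : g ≠ 0 := Mchain_ne0 hT₁ hxmax hT'sub hwx hwg
                  rcases hDD 0 g (Ne.symm hg0) p (mem_TT hpT0) w (mem_TT hwg) hpw u
                    with h | h
                  · exact hup.2 h
                  · have hk'g : k' ≠ g := by
                      rw [hk'jq]
                      exact Ne.symm hgjq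
                    exact M_anti hT'disj hxmax hDD hux hwx huk' hwg hk'g h
              · intro v e hconn hvx hve he0
                exact tuniq hT'disj (caseV v e hconn hvx hve he0 q hqlex) hqT'
        · exact fromV p jp hcp hpltx hpT' hjp0
  -- the construction: components of the incomparability graph, ordered by kfun
  have hKmem : ∀ y : α, kfun y ∈ Finset.univ.image (kfun (α := α)) :=
    fun y => Finset.mem_image_of_mem _ (Finset.mem_univ y)
  set K : Finset ℕ := Finset.univ.image (kfun (α := α)) with hK
  set iso := K.orderIsoOfFin rfl with hiso
  have hTdisj : ∀ j k : Fin (s + 3), j ≠ k → Disjoint (TT x T' j) (TT x T' k) := by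
    intro j k hjk
    rw [Set.disjoint_left]
    intro a haj hak
    by_cases hax : a = x
    · have hj0 : j = 0 := by
        by_contra h
        refine hxT' j ?_
        unfold TT at haj
        rw [if_neg h] at haj
        exact hax ▸ haj
      have hk0 : k = 0 := by
        by_contra h
        refine hxT' k ?_
        unfold TT at hak
        rw [if_neg h] at hak
        exact hax ▸ hak
      exact hjk (hj0.trans hk0.symm)
    · exact Set.disjoint_left.mp (hT'disj j k hjk) (memT' a j hax haj) (memT' a k hax hak)
  refine ⟨K.card, fun i => {y | kfun y = (iso i : ℕ)}, fun i => Set.subset_univ _,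
    ?_, ?_, fun j => Set.subset_univ _, ?_, hTdisj, ?_, ?_⟩
  · -- partition
    intro y _
    refine ⟨iso.symm ⟨kfun y, hKmem y⟩, ?_, ?_⟩
    · show kfun y = ((iso (iso.symm ⟨kfun y, hKmem y⟩)) : ℕ)
      rw [OrderIso.apply_symm_apply]
    · intro i hi
      have h2 : iso i = ⟨kfun y, hKmem y⟩ := Subtype.ext hi.symm
      rw [← h2, OrderIso.symm_apply_apply]
  · -- ordinal sum
    intro i j hij p hp q hq
    have h1 : (iso i : ℕ) < (iso j : ℕ) := Subtype.coe_lt_coe.mpr (iso.strictMono hij)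
    have hp' : kfun p = (iso i : ℕ) := hp
    have hq' : kfun q = (iso j : ℕ) := hq
    exact lt_of_kfun_lt (by rw [hp', hq']; exact h1)
  · -- chains
    intro j
    by_cases h : j = 0
    · subst h
      unfold TT
      rw [if_pos rfl]
      exact hT₁
    · unfold TT
      rw [if_neg h]
      exact hT'chain j
  · -- cover
    intro y _
    by_cases h : y = x
    · exact ⟨0, h ▸ x_mem_TT0⟩
    · obtain ⟨j, hj⟩ := hcov' y h
      exact ⟨j, mem_TT hj⟩
  · -- condition 8
    intro i
    have hmemK : ((iso i : ℕ)) ∈ Finset.univ.image (kfun (α := α)) := (iso i).2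
    obtain ⟨y₀, -, hy₀⟩ := Finset.mem_image.mp hmemK
    have hmem : ∀ z : α, z ∈ {y | kfun y = (iso i : ℕ)} ↔ kfun z = kfun y₀ := by
      intro z
      constructor
      · intro h
        exact h.trans hy₀.symm
      · intro h
        exact h.trans hy₀
    by_cases hxin : kfun x = kfun y₀
    · -- the component of x
      by_cases hbad : ∃ (p q : α) (jp jq : Fin (s + 3)), kfun p = kfun y₀ ∧
          kfun q = kfun y₀ ∧ p ∈ TT x T' jp ∧ q ∈ TT x T' jq ∧ jp ≠ jq ∧ p < q
      · obtain ⟨p, q, jp, jq, hpk, hqk, hpT, hqT, hne, hpq⟩ := hbad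
        obtain ⟨c, hc0, hMc, hDc⟩ := badlemma p q jp jq
          (conn_of_kfun_eq (hxin.trans hpk.symm)) (conn_of_kfun_eq (hxin.trans hqk.symm))
          hpT hqT hne hpq
        left
        set o1 : Fin (s + 3) := ⟨1, by omega⟩ with ho1
        set o2 : Fin (s + 3) := ⟨2, by omega⟩ with ho2
        have h1ne0 : o1 ≠ 0 := Fin.ne_of_val_ne (by simp [ho1])
        have h2ne0 : o2 ≠ 0 := Fin.ne_of_val_ne (by simp [ho2])
        have h12 : o2 ≠ o1 := Fin.ne_of_val_ne (by simp [ho1, ho2])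
        refine ⟨if c = o1 then o2 else o1, ?_⟩
        have hjs : (if c = o1 then o2 else o1) ≠ 0 ∧ (if c = o1 then o2 else o1) ≠ c := by
          by_cases h : c = o1
          · rw [if_pos h, h]
            exact ⟨h2ne0, h12⟩
          · rw [if_neg h]
            exact ⟨h1ne0, fun hh => h hh.symm⟩
        obtain ⟨hjs0, hjsc⟩ := hjs
        rw [Set.eq_empty_iff_forall_notMem]
        rintro y ⟨hyR, hyT⟩
        have hyR' : kfun y = kfun y₀ := (hmem y).mp hyR
        have hyx : y ≠ x := by
          rintro rfl
          refine hxT' (if c = o1 then o2 else o1) ?_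
          unfold TT at hyT
          rwa [if_neg hjs0] at hyT
        have hyT' : y ∈ T' (if c = o1 then o2 else o1) := memT' y _ hyx hyT
        by_cases hylex : y ≤ x
        · have hylt : y < x := lt_of_le_of_ne hylex hyx
          have hconn : Conn x y := conn_of_kfun_eq (hxin.trans hyR'.symm)
          exact hjsc (hDc y _ hconn hylt hyT' hjs0)
        · exact hjsc (tuniq hT'disj hyT' (hMc y hylex))
      · right
        intro jp jq hjk p hp q hq
        constructor
        · intro hle
          have hne : p ≠ q := by
            rintro rfl
            exact Set.disjoint_left.mp (hTdisj jp jq hjk) hp.2 hq.2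
          exact hbad ⟨p, q, jp, jq, (hmem p).mp hp.1, (hmem q).mp hq.1, hp.2, hq.2, hjk,
            lt_of_le_of_ne hle hne⟩
        · intro hle
          have hne : q ≠ p := by
            rintro rfl
            exact Set.disjoint_left.mp (hTdisj jp jq hjk) hp.2 hq.2
          exact hbad ⟨q, p, jq, jp, (hmem q).mp hq.1, (hmem p).mp hp.1, hq.2, hp.2,
            Ne.symm hjk, lt_of_le_of_ne hle hne⟩
    · -- a component not containing x: contained in a block of R'
      have hy₀x : y₀ ≠ x := by
        rintro rfl
        exact hxin rfl
      obtain ⟨i₀, hi₀, -⟩ := hR'part y₀ hy₀x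
      have hsame : ∀ z : α, Conn y₀ z → z ∈ R' i₀ := by
        intro z hconn
        induction hconn with
        | refl => exact hi₀
        | @tail b z' hyb hbz ih =>
          have hz'x : z' ≠ x := by
            rintro rfl
            exact hxin (kfun_eq_of_conn (hyb.tail hbz)).symm
          obtain ⟨i₁, hi₁, -⟩ := hR'part z' hz'x
          rcases lt_trichotomy i₀ i₁ with h | h | h
          · exact absurd (hR'ord i₀ i₁ h b ih z' hi₁) (fun hh => hbz.1 hh.le)
          · exact h ▸ hi₁
          · exact absurd (hR'ord i₁ i₀ h z' hi₁ b ih) (fun hh => hbz.2 hh.le)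
      have hinR' : ∀ z : α, kfun z = kfun y₀ → z ∈ R' i₀ := fun z hz =>
        hsame z (conn_of_kfun_eq hz.symm)
      rcases hR'cond i₀ with ⟨j₀, hj₀⟩ | hanti
      · left
        refine ⟨j₀, Set.eq_empty_iff_forall_notMem.mpr ?_⟩
        rintro y ⟨hyR, hyT⟩
        have hyR' : y ∈ R' i₀ := hinR' y ((hmem y).mp hyR)
        have hyx : y ≠ x := hR'sub i₀ hyR'
        have hmem2 : y ∈ R' i₀ ∩ T' j₀ := ⟨hyR', memT' y j₀ hyx hyT⟩
        rw [hj₀] at hmem2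
        exact hmem2
      · right
        intro jp jq hjk p hp q hq
        have hpR := hinR' p ((hmem p).mp hp.1)
        have hqR := hinR' q ((hmem q).mp hq.1)
        exact hanti jp jq hjk p ⟨hpR, memT' p jp (hR'sub i₀ hpR) hp.2⟩ q
          ⟨hqR, memT' q jq (hR'sub i₀ hqR) hq.2⟩


end Farley

/-- Farley's key lemma for the Daykin–Daykin theorem. Let `P' = P \\ {x}`
satisfy `P'(R'₁,…,R'ₘ; T'₁, T₂,…,Tₛ)` with `s ≥ 3`, where `x` is an element of
maximal height in `P` having at least as many lower covers as any other
element of maximal height, `T₁ := T'₁ ∪ {x}` is a chain, and the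
Daykin–Daykin hypothesis holds in `P` for the chains `T₁, T₂, …, Tₛ`. Then
`P(R₁,…,Rₙ; T₁,…,Tₛ)` for some subsets `R₁,…,Rₙ`. -/
theorem farley_key_lemma {α : Type*} [Fintype α] [PartialOrder α]
    (x : α) (m s : ℕ)
    (R' : Fin m → Set α) (T' : Fin (s + 3) → Set α)
    (hP' : DDCondOn {y : α | y ≠ x} R' T')
    (hht : heightIn Set.univ x = sSup {n | ∃ p : α, heightIn Set.univ p = n})
    (hcov : ∀ p : α, heightIn Set.univ p = sSup {n | ∃ q : α, heightIn Set.univ q = n} →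
      {q : α | q ⋖ p}.ncard ≤ {q : α | q ⋖ x}.ncard)
    (hT₁ : IsChain (· ≤ ·) (T' 0 ∪ {x}))
    (hDD : ∀ j k : Fin (s + 3), j ≠ k →
      ∀ p ∈ (fun j => if j = 0 then T' 0 ∪ {x} else T' j) j,
      ∀ q ∈ (fun j => if j = 0 then T' 0 ∪ {x} else T' j) k,
        p < q → ∀ r : α, p ≤ r ∨ r ≤ q) :
    ∃ (n : ℕ) (R : Fin n → Set α),
      DDCondOn Set.univ R (fun j => if j = 0 then T' 0 ∪ {x} else T' j) := by
  classical
  have hxmax : ∀ y : α, x ≤ y → y = x := by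
    intro y hxy
    by_contra hne
    have hxy' : x < y := lt_of_le_of_ne hxy (Ne.symm hne)
    have hbdd : ∀ p : α, BddAbove {n | ∃ C : Finset α, (C : Set α) ⊆ Set.univ ∧
        IsChain (· ≤ ·) (C : Set α) ∧ p ∈ C ∧ (∀ y ∈ C, y ≤ p) ∧ C.card - 1 = n} := by
      intro p
      refine ⟨Fintype.card α, ?_⟩
      rintro n ⟨C, -, -, -, -, rfl⟩
      have := Finset.card_le_univ C
      omega
    have hne' : ∀ p : α, Set.Nonempty {n | ∃ C : Finset α, (C : Set α) ⊆ Set.univ ∧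
        IsChain (· ≤ ·) (C : Set α) ∧ p ∈ C ∧ (∀ y ∈ C, y ≤ p) ∧ C.card - 1 = n} := by
      intro p
      refine ⟨0, {p}, Set.subset_univ _, ?_, Finset.mem_singleton_self p, ?_, by simp⟩
      · rw [Finset.coe_singleton]
        exact Set.subsingleton_singleton.isChain
      · intro z hz
        rw [Finset.mem_singleton] at hz
        exact le_of_eq hz
    have hmem : heightIn Set.univ x ∈ {n | ∃ C : Finset α, (C : Set α) ⊆ Set.univ ∧
        IsChain (· ≤ ·) (C : Set α) ∧ x ∈ C ∧ (∀ y ∈ C, y ≤ x) ∧ C.card - 1 = n} :=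
      Nat.sSup_mem (hne' x) (hbdd x)
    obtain ⟨C, -, hCchain, hxC, hCle, hCcard⟩ := hmem
    have hCpos : 0 < C.card := Finset.card_pos.mpr ⟨x, hxC⟩
    have hyC : y ∉ C := fun h => absurd (hCle y h) (not_le_of_gt hxy')
    have hchain' : IsChain (· ≤ ·) ((insert y C : Finset α) : Set α) := by
      rw [Finset.coe_insert]
      exact hCchain.insert (fun b hb _ => Or.inr ((hCle b (Finset.mem_coe.mp hb)).trans hxy'.le))
    have hmem2 : heightIn Set.univ x + 1 ∈ {n | ∃ C : Finset α, (C : Set α) ⊆ Set.univ ∧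
        IsChain (· ≤ ·) (C : Set α) ∧ y ∈ C ∧ (∀ z ∈ C, z ≤ y) ∧ C.card - 1 = n} := by
      refine ⟨insert y C, Set.subset_univ _, hchain', Finset.mem_insert_self y C, ?_, ?_⟩
      · intro z hz
        rcases Finset.mem_insert.mp hz with h | h
        · exact le_of_eq h
        · exact (hCle z h).trans hxy'.le
      · rw [Finset.card_insert_of_notMem hyC]
        omega
    have h1 : heightIn Set.univ x + 1 ≤ heightIn Set.univ y := le_csSup (hbdd y) hmem2
    have hGbdd : BddAbove {n | ∃ p : α, heightIn Set.univ p = n} := by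
      refine ⟨Fintype.card α, ?_⟩
      rintro n ⟨p, rfl⟩
      refine csSup_le (hne' p) ?_
      rintro n' ⟨C', -, -, -, -, rfl⟩
      have := Finset.card_le_univ C'
      omega
    have h2 : heightIn Set.univ y ≤ sSup {n | ∃ p : α, heightIn Set.univ p = n} :=
      le_csSup hGbdd ⟨y, rfl⟩
    rw [← hht] at h2
    omega
  exact Farley.key_aux x m s R' T' hP' hxmax hT₁ hDD
end
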